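/- arXiv:2010.13201 — 7 statements merged into one kernel-verified Lean document; each statement's English description precedes it below -/
import Mathlib

section
/- Let H be a complex Hilbert space, I an index set, and (v_i)_{i∈I}, (w_i)_{i∈I} two families in H with ⟨v_i, w_j⟩ = δ_{ij} for all i, j ∈ I. Let A, B ⊆ I be disjoint subsets. If there exist vectors f, g ∈ H such that ⟨f, v_i⟩ = 0 for all i ∈ A, ⟨g, w_i⟩ = 0 for all i ∈ B, and ⟨f, g⟩ ≠ 0, then the closed linear span of {v_i : i ∈ A} ∪ {w_i : i ∈ B} is a proper subspace of H (i.e., the mixed system is incomplete). -/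
open scoped ComplexInnerProductSpace Classical

/-!
Let `K` be the orthogonal complement of `span {w_i : i ∈ B}`. By biorthogonality and
`A ∩ B = ∅`, every `v_i` with `i ∈ A` lies in `K`, and so does `g`. The projection `P_K f` is
then orthogonal to every `v_i` (`i ∈ A`), because `⟪v_i, P_K f⟫ = ⟪P_K v_i, f⟫ = ⟪v_i, f⟫ = 0`,
and to every `w_i` (`i ∈ B`), because it lies in `K`. It is nonzero since
`⟪P_K f, g⟫ = ⟪f, P_K g⟫ = ⟪f, g⟫ ≠ 0`, so the mixed system has a nonzero vector orthogonal
to its closed span.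
-/

namespace Submodule

open scoped InnerProductSpace

variable {𝕜 E : Type*} [RCLike 𝕜] [NormedAddCommGroup E] [InnerProductSpace 𝕜 E]

theorem mem_orthogonal_span_iff {s : Set E} {x : E} :
    x ∈ (span 𝕜 s)ᗮ ↔ ∀ u ∈ s, ⟪u, x⟫_𝕜 = 0 := by
  rw [← span_singleton_le_iff_mem, ← isOrtho_iff_le, isOrtho_comm, isOrtho_span]
  simp

theorem topologicalClosure_ne_top_of_mem_orthogonal {K : Submodule 𝕜 E} {x : E}
    (hx : x ∈ Kᗮ) (hx₀ : x ≠ 0) : K.topologicalClosure ≠ ⊤ := by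
  intro htop
  rw [← orthogonal_closure, htop, top_orthogonal_eq_bot, mem_bot] at hx
  exact hx₀ hx

theorem topologicalClosure_span_union_ne_top (K : Submodule 𝕜 E) [K.HasOrthogonalProjection]
    {s t : Set E} (hs : s ⊆ K) (ht : t ⊆ Kᗮ) {f g : E} (hf : ∀ u ∈ s, ⟪u, f⟫_𝕜 = 0)
    (hg : g ∈ K) (hfg : ⟪f, g⟫_𝕜 ≠ 0) : (span 𝕜 (s ∪ t)).topologicalClosure ≠ ⊤ := by
  have hPf : K.starProjection f ∈ K := K.starProjection_apply_mem f
  have horth : K.starProjection f ∈ (span 𝕜 (s ∪ t))ᗮ := by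
    rw [mem_orthogonal_span_iff]
    rintro u (hu | hu)
    · rw [← inner_starProjection_left_eq_right, starProjection_eq_self_iff.mpr (hs hu), hf u hu]
    · exact inner_left_of_mem_orthogonal hPf (ht hu)
  refine topologicalClosure_ne_top_of_mem_orthogonal horth fun hPf₀ => hfg ?_
  rw [← starProjection_eq_self_iff.mpr hg, ← inner_starProjection_left_eq_right, hPf₀,
    inner_zero_left]

end Submodule

open Submodule in
/-- If `(v_i)` and `(w_i)` are biorthogonal families in a complex Hilbert space `H`,
`A, B` are disjoint index sets, and there exist `f ⊥ {v_i : i ∈ A}`, `g ⊥ {w_i : i ∈ B}`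
with `⟨f, g⟩ ≠ 0`, then the mixed system `{v_i : i ∈ A} ∪ {w_i : i ∈ B}` is incomplete,
i.e. its closed linear span is a proper subspace of `H`. -/
theorem stmt0 {H : Type*} [NormedAddCommGroup H] [InnerProductSpace ℂ H] [CompleteSpace H]
    {ι : Type*} (v w : ι → H)
    (hbi : ∀ i j : ι, ⟪v i, w j⟫ = if i = j then (1 : ℂ) else 0)
    (A B : Set ι) (hAB : Disjoint A B)
    (f g : H)
    (hf : ∀ i ∈ A, ⟪f, v i⟫ = (0 : ℂ))
    (hg : ∀ i ∈ B, ⟪g, w i⟫ = (0 : ℂ))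
    (hfg : ⟪f, g⟫ ≠ (0 : ℂ)) :
    (Submodule.span ℂ (v '' A ∪ w '' B)).topologicalClosure ≠ ⊤ := by
  have hvA : v '' A ⊆ (span ℂ (w '' B))ᗮ := by
    rintro _ ⟨i, hi, rfl⟩
    rw [SetLike.mem_coe, mem_orthogonal_span_iff]
    rintro _ ⟨j, hj, rfl⟩
    rw [inner_eq_zero_symm, hbi, if_neg (hAB.ne_of_mem hi hj)]
  have hgK : g ∈ (span ℂ (w '' B))ᗮ := by
    rw [mem_orthogonal_span_iff]
    rintro _ ⟨j, hj, rfl⟩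
    exact inner_eq_zero_symm.mp (hg j hj)
  refine topologicalClosure_span_union_ne_top _ hvA
    (subset_span.trans (le_orthogonal_orthogonal _)) ?_ hgK hfg
  rintro _ ⟨i, hi, rfl⟩
  exact inner_eq_zero_symm.mp (hf i hi)
end

section
/- Let (ρ_k)_{k≥1} be positive real numbers with ρ_{k+1} ≥ 2ρ_k, and let (t_k)_{k≥1} be real numbers with |t_k − ρ_k| ≤ 0.2ρ_k for all k, such that 0.001 ≤ ∏_{k=1}^N (t_k/ρ_k) ≤ 1000 for every N ≥ 1. Then the infinite product m(z) = ∏_{k≥1} (1 − z/ρ_k)/(1 − z/t_k) converges locally uniformly on ℂ ∖ {t_k : k ≥ 1}, and there exist constants c, C > 0 such that for every k ≥ 1 and every z ∈ ℂ with (ρ_{k−1} + ρ_k)/2 ≤ |z| ≤ (ρ_k + ρ_{k+1})/2 (where ρ₀ := 0) and z ≠ t_k, one has c·|z − ρ_k|/|z − t_k| ≤ |m(z)| ≤ C·|z − ρ_k|/|z − t_k|. -/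
/-!
Write `a_j(z) = (1 - z/ρ_j)/(1 - z/t_j) = (t_j/ρ_j) (z - ρ_j)/(z - t_j)`, so that
`a_j(z) - 1 = z (ρ_j - t_j) / (ρ_j (t_j - z))`. For `|z| ≤ 3ρ_j/8` the second form gives
`|a_j(z) - 1| ≤ |z|/(2ρ_j)`, summable by lacunarity: this gives the locally uniform convergence,
and on the `k`-th annulus it bounds the factors `j ≥ k + 2`. For `j < k` one uses the first form
instead: the prefactors multiply to `∏ t_j/ρ_j ∈ [0.001, 1000]`, while `|z - ρ_j|/|z - t_j|` is
within `ρ_j/|z|` of `1`, and `∑_{j<k} ρ_j ≤ 2ρ_{k-1}`. The factors `j = k, k + 1` are estimated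
directly.
-/

open Filter Finset Real

section FieldIdentities

variable {K : Type*} [Field K]

theorem one_sub_div_div_one_sub_div {r τ : K} (hr : r ≠ 0) (hτ : τ ≠ 0) (z : K) :
    (1 - z / r) / (1 - z / τ) = τ / r * ((z - r) / (z - τ)) := by
  rw [one_sub_div hr, one_sub_div hτ, div_div_div_comm, ← neg_sub z r, ← neg_sub z τ,
    neg_div_neg_eq, div_div_eq_mul_div, mul_div_assoc, mul_comm]

theorem one_sub_div_div_one_sub_div_sub_one {r τ z : K} (hr : r ≠ 0) (hτ : τ ≠ 0) (hz : z ≠ τ) :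
    (1 - z / r) / (1 - z / τ) - 1 = z * (r - τ) / (r * (τ - z)) := by
  have : τ - z ≠ 0 := sub_ne_zero.2 hz.symm
  rw [one_sub_div_div_one_sub_div hr hτ, ← neg_sub τ z, ← neg_sub r z]
  field_simp
  ring

end FieldIdentities

theorem mul_mem_Icc_mul {α : Type*} [Semiring α] [PartialOrder α] [IsOrderedRing α]
    {a b c d x y : α} (ha : 0 ≤ a) (hc : 0 ≤ c) (hx : x ∈ Set.Icc a b) (hy : y ∈ Set.Icc c d) :
    x * y ∈ Set.Icc (a * c) (b * d) :=
  ⟨mul_le_mul hx.1 hy.1 hc (ha.trans hx.1),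
    mul_le_mul hx.2 hy.2 (hc.trans hy.1) (ha.trans (hx.1.trans hx.2))⟩

theorem abs_norm_div_norm_sub_one_le {E : Type*} [SeminormedAddCommGroup E] (a : E) {b : E}
    (hb : 0 < ‖b‖) : |‖a‖ / ‖b‖ - 1| ≤ ‖a - b‖ / ‖b‖ := by
  rw [← div_self hb.ne', ← sub_div, abs_div, abs_of_pos hb]
  exact div_le_div_of_nonneg_right (abs_norm_sub_norm_le a b) hb.le

theorem Real.exp_neg_three_mul_le_one_sub {x : ℝ} (hx₀ : 0 ≤ x) (hx : x ≤ 2 / 3) :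
    exp (-(3 * x)) ≤ 1 - x := by
  have hpos : 0 < 1 - x := by linarith
  have hinv : (1 - x)⁻¹ ≤ 1 + 3 * x := by
    rw [inv_le_iff_one_le_mul₀ hpos]
    nlinarith
  calc exp (-(3 * x)) ≤ exp (log (1 - x)) := by
        gcongr
        linarith [one_sub_inv_le_log_of_pos hpos]
    _ = 1 - x := exp_log hpos

theorem prod_mem_Icc_exp {ι : Type*} {s : Finset ι} {x δ : ι → ℝ} {B : ℝ}
    (hx : ∀ i ∈ s, |x i - 1| ≤ δ i) (hδ : ∀ i ∈ s, δ i ≤ 2 / 3) (hB : ∑ i ∈ s, δ i ≤ B) :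
    ∏ i ∈ s, x i ∈ Set.Icc (exp (-(3 * B))) (exp B) := by
  have hxδ : ∀ i ∈ s, 1 - δ i ≤ x i ∧ x i ≤ 1 + δ i := fun i hi => by
    constructor <;> linarith [abs_le.1 (hx i hi)]
  constructor
  · calc exp (-(3 * B)) ≤ exp (-(3 * ∑ i ∈ s, δ i)) := by gcongr
      _ = ∏ i ∈ s, exp (-(3 * δ i)) := by rw [← exp_sum, mul_sum, sum_neg_distrib]
      _ ≤ ∏ i ∈ s, x i := prod_le_prod (fun i _ => (exp_pos _).le) fun i hi =>
          (exp_neg_three_mul_le_one_sub ((abs_nonneg _).trans (hx i hi)) (hδ i hi)).trans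
            (hxδ i hi).1
  · calc ∏ i ∈ s, x i ≤ ∏ i ∈ s, exp (δ i) :=
          prod_le_prod (fun i hi => by linarith [hxδ i hi, hδ i hi]) fun i hi =>
            (hxδ i hi).2.trans (by linarith [add_one_le_exp (δ i)])
      _ = exp (∑ i ∈ s, δ i) := (exp_sum _ _).symm
      _ ≤ exp B := by gcongr

theorem isClosed_range_of_tendsto_norm {E : Type*} [NormedAddCommGroup E] [ProperSpace E]
    {f : ℕ → E} (hf : Tendsto (fun n => ‖f n‖) atTop atTop) : IsClosed (Set.range f) := by
  refine (isProperMap_iff_tendsto_cocompact.2 ⟨continuous_of_discreteTopology, ?_⟩).isClosed_range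
  rw [cocompact_eq_atTop]
  exact tendsto_cocompact_of_tendsto_dist_comp_atTop 0 (by simpa using hf)

theorem tendstoLocallyUniformlyOn_prod_range {α R : Type*} [TopologicalSpace α]
    [LocallyCompactSpace α] [NormedCommRing R] [NormOneClass R] [CompleteSpace R]
    {f : ℕ → α → R} {U : Set α} (hU : IsOpen U) (hcont : ∀ j, ContinuousOn (f j) U)
    (hbound : ∀ K ⊆ U, IsCompact K →
      ∃ u : ℕ → ℝ, Summable u ∧ ∀ᶠ j in atTop, ∀ z ∈ K, ‖f j z - 1‖ ≤ u j) :
    TendstoLocallyUniformlyOn (fun N z => ∏ j ∈ range N, f j z) (fun z => ∏' j, f j z)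
      atTop U := by
  refine HasProdLocallyUniformlyOn.tendstoLocallyUniformlyOn_finsetRange ?_
  refine hasProdLocallyUniformlyOn_of_forall_compact hU fun K hKU hK => ?_
  obtain ⟨u, hu, hfu⟩ := hbound K hKU hK
  simpa only [add_sub_cancel] using hu.hasProdUniformlyOn_nat_one_add hK hfu fun j =>
    ((hcont j).sub continuousOn_const).mono hKU

section Factor

variable {r τ : ℝ} {z : ℂ}

theorem pos_of_abs_sub_le (hr : 0 < r) (hτ : |τ - r| ≤ 0.2 * r) : 0 < τ := by
  linarith [abs_le.1 hτ]

theorem norm_sub_ofReal_mem_Icc {c : ℝ} (hc : 0 ≤ c) (z : ℂ) :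
    ‖z - c‖ ∈ Set.Icc |‖z‖ - c| (‖z‖ + c) := by
  have h₁ := abs_norm_sub_norm_le z (c : ℂ)
  have h₂ := norm_sub_le z (c : ℂ)
  rw [Complex.norm_real, Real.norm_of_nonneg hc] at h₁ h₂
  exact ⟨h₁, h₂⟩

theorem norm_factor (hr : 0 < r) (hτ : 0 < τ) :
    ‖(1 - z / r) / (1 - z / τ)‖ = τ / r * (‖z - r‖ / ‖z - τ‖) := by
  rw [one_sub_div_div_one_sub_div (by exact_mod_cast hr.ne') (by exact_mod_cast hτ.ne')]
  simp only [norm_mul, norm_div, Complex.norm_real, Real.norm_of_nonneg hr.le,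
    Real.norm_of_nonneg hτ.le]

theorem norm_factor_mem_Icc_mul (hr : 0 < r) (hτ : |τ - r| ≤ 0.2 * r) :
    ‖(1 - z / r) / (1 - z / τ)‖ ∈
      Set.Icc (0.8 * (‖z - r‖ / ‖z - τ‖)) (1.2 * (‖z - r‖ / ‖z - τ‖)) := by
  rw [norm_factor hr (pos_of_abs_sub_le hr hτ)]
  obtain ⟨hτl, hτu⟩ := abs_le.1 hτ
  constructor
  · gcongr
    rw [le_div_iff₀ hr]
    linarith
  · gcongr
    rw [div_le_iff₀ hr]
    linarith

theorem norm_factor_mem_Icc (hr : 0 < r) (hτ : |τ - r| ≤ 0.2 * r) (hz : 4 * ‖z‖ ≤ 3 * r) :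
    ‖(1 - z / r) / (1 - z / τ)‖ ∈ Set.Icc (1 / 10) 42 := by
  obtain ⟨hτl, hτu⟩ := abs_le.1 hτ
  have hτ₀ : 0 < τ := by linarith
  obtain ⟨hr₁, hr₂⟩ := norm_sub_ofReal_mem_Icc hr.le z
  obtain ⟨hτ₁, hτ₂⟩ := norm_sub_ofReal_mem_Icc hτ₀.le z
  have hnum : r / 4 ≤ ‖z - r‖ ∧ ‖z - r‖ ≤ 7 * r / 4 := by
    constructor <;> linarith [neg_abs_le (‖z‖ - r)]
  have hden : r / 20 ≤ ‖z - τ‖ ∧ ‖z - τ‖ ≤ 2 * r := by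
    constructor <;> linarith [neg_abs_le (‖z‖ - τ)]
  have hpos : 0 < r * ‖z - τ‖ := mul_pos hr (by linarith)
  rw [norm_factor hr hτ₀, div_mul_div_comm]
  constructor
  · rw [le_div_iff₀ hpos]
    nlinarith
  · rw [div_le_iff₀ hpos]
    nlinarith

theorem abs_norm_ratio_sub_one_le (hr : 0 < r) (hτ : |τ - r| ≤ 0.2 * r)
    (hz : 3 * r ≤ 2 * ‖z‖) : |‖z - r‖ / ‖z - τ‖ - 1| ≤ r / ‖z‖ := by
  have hτ₀ := pos_of_abs_sub_le hr hτ
  have hdist : ‖z‖ / 5 ≤ ‖z - τ‖ := by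
    linarith [(norm_sub_ofReal_mem_Icc hτ₀.le z).1, le_abs_self (‖z‖ - τ), abs_le.1 hτ]
  have hz₀ : 0 < ‖z‖ := by linarith
  calc |‖z - r‖ / ‖z - τ‖ - 1| ≤ ‖(z - r) - (z - τ)‖ / ‖z - τ‖ :=
        abs_norm_div_norm_sub_one_le _ (by linarith)
    _ = |τ - r| / ‖z - τ‖ := by
        rw [sub_sub_sub_cancel_left, ← Complex.ofReal_sub, Complex.norm_real, Real.norm_eq_abs]
    _ ≤ 0.2 * r / (‖z‖ / 5) := by gcongr
    _ = r / ‖z‖ := by field_simp; norm_num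

theorem norm_factor_sub_one_le (hr : 0 < r) (hτ : |τ - r| ≤ 0.2 * r) (hz : 8 * ‖z‖ ≤ 3 * r) :
    ‖(1 - z / r) / (1 - z / τ) - 1‖ ≤ ‖z‖ / (2 * r) := by
  have hτ₀ := pos_of_abs_sub_le hr hτ
  have hdist : 0.4 * r ≤ ‖(τ : ℂ) - z‖ := by
    rw [norm_sub_rev]
    linarith [(norm_sub_ofReal_mem_Icc hτ₀.le z).1, neg_abs_le (‖z‖ - τ), abs_le.1 hτ]
  have hzτ : z ≠ τ := by
    rintro rfl
    rw [sub_self, norm_zero] at hdist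
    linarith
  rw [one_sub_div_div_one_sub_div_sub_one (by exact_mod_cast hr.ne')
      (by exact_mod_cast hτ₀.ne') hzτ, norm_div, norm_mul, norm_mul, ← Complex.ofReal_sub,
    Complex.norm_real, Complex.norm_real, Real.norm_of_nonneg hr.le, Real.norm_eq_abs,
    abs_sub_comm, div_le_div_iff₀ (mul_pos hr (by linarith)) (by positivity)]
  calc ‖z‖ * |τ - r| * (2 * r) ≤ ‖z‖ * (0.2 * r) * (2 * r) := by gcongr
    _ = ‖z‖ * (r * (0.4 * r)) := by ring
    _ ≤ ‖z‖ * (r * ‖(τ : ℂ) - z‖) := by gcongr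

end Factor

structure IsLacunary (ρ : ℕ → ℝ) : Prop where
  zero : ρ 0 = 0
  pos : ∀ k ≥ 1, 0 < ρ k
  two_mul_le : ∀ k ≥ 1, 2 * ρ k ≤ ρ (k + 1)

namespace IsLacunary

variable {ρ : ℕ → ℝ}

theorem two_mul_le_succ (hρ : IsLacunary ρ) (k : ℕ) : 2 * ρ k ≤ ρ (k + 1) := by
  rcases Nat.eq_zero_or_pos k with rfl | hk
  · simpa [hρ.zero] using (hρ.pos 1 le_rfl).le
  · exact hρ.two_mul_le k hk

theorem nonneg (hρ : IsLacunary ρ) (k : ℕ) : 0 ≤ ρ k := by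
  rcases Nat.eq_zero_or_pos k with rfl | hk
  · exact hρ.zero.ge
  · exact (hρ.pos k hk).le

theorem monotone (hρ : IsLacunary ρ) : Monotone ρ :=
  monotone_nat_of_le_succ fun k => by linarith [hρ.two_mul_le_succ k, hρ.nonneg k]

theorem sum_Icc_le (hρ : IsLacunary ρ) (n : ℕ) : ∑ j ∈ Finset.Icc 1 n, ρ j ≤ 2 * ρ n := by
  induction n with
  | zero => simp [hρ.zero]
  | succ n ih =>
    rw [sum_Icc_succ_top (by omega)]
    linarith [hρ.two_mul_le_succ n]

theorem sum_Ioc_inv_le (hρ : IsLacunary ρ) {m : ℕ} (hm : 1 ≤ m) (N : ℕ) :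
    ∑ j ∈ Ioc m N, (ρ j)⁻¹ ≤ (ρ m)⁻¹ := by
  rcases lt_or_ge N m with hN | hN
  · simpa [Ioc_eq_empty_of_le hN.le] using (hρ.pos m hm).le
  suffices ∑ j ∈ Ioc m N, (ρ j)⁻¹ ≤ (ρ m)⁻¹ - (ρ N)⁻¹ by
    linarith [inv_pos.2 (hρ.pos N (hm.trans hN))]
  induction N, hN using Nat.le_induction with
  | base => simp
  | succ N hmN ih =>
    have hN₀ := hρ.pos N (hm.trans hmN)
    have : 2 * (ρ (N + 1))⁻¹ ≤ (ρ N)⁻¹ := by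
      rw [← div_eq_mul_inv, div_le_iff₀ (by linarith [hρ.two_mul_le_succ N]), inv_mul_eq_div,
        le_div_iff₀ hN₀]
      linarith [hρ.two_mul_le_succ N]
    rw [sum_Ioc_succ_top hmN]
    linarith

theorem tendsto_atTop (hρ : IsLacunary ρ) : Tendsto ρ atTop atTop :=
  (tendsto_add_atTop_iff_nat 1).1 <| tendsto_atTop_of_geom_le (hρ.pos 1 le_rfl) one_lt_two
    fun n => hρ.two_mul_le (n + 1) (by omega)

theorem summable_inv (hρ : IsLacunary ρ) : Summable fun k => (ρ k)⁻¹ := by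
  refine summable_of_ratio_norm_eventually_le (r := 1 / 2) (by norm_num)
    (eventually_atTop.2 ⟨1, fun k hk => ?_⟩)
  have hk₀ := hρ.pos k hk
  rw [Real.norm_of_nonneg (inv_nonneg.2 (hρ.nonneg _)), Real.norm_of_nonneg (inv_nonneg.2 hk₀.le)]
  calc (ρ (k + 1))⁻¹ ≤ (2 * ρ k)⁻¹ := inv_anti₀ (by positivity) (hρ.two_mul_le k hk)
    _ = 1 / 2 * (ρ k)⁻¹ := by rw [mul_inv, one_div]

variable {t : ℕ → ℝ}

theorem isOpen_setOf_forall_ne (hρ : IsLacunary ρ) (ht : ∀ k ≥ 1, |t k - ρ k| ≤ 0.2 * ρ k) :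
    IsOpen {z : ℂ | ∀ k ≥ 1, z ≠ (t k : ℂ)} := by
  have hU : {z : ℂ | ∀ k ≥ 1, z ≠ (t k : ℂ)} = (Set.range fun j => (t (j + 1) : ℂ))ᶜ := by
    ext z
    simp only [Set.mem_ofPred_eq, Set.mem_compl_iff, Set.mem_range, not_exists]
    exact ⟨fun h j hj => h (j + 1) (by omega) hj.symm,
      fun h k hk hz => h (k - 1) (by rw [Nat.sub_add_cancel hk, hz])⟩
  rw [hU]
  refine (isClosed_range_of_tendsto_norm (tendsto_atTop_mono (fun j => ?_)
    (((tendsto_add_atTop_iff_nat 1).2 hρ.tendsto_atTop).const_mul_atTop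
      (by norm_num : (0 : ℝ) < 0.8)))).isOpen_compl
  rw [Complex.norm_real, Real.norm_eq_abs]
  linarith [abs_le.1 (ht (j + 1) (by omega)), le_abs_self (t (j + 1))]

theorem exists_tendstoLocallyUniformlyOn_prod (hρ : IsLacunary ρ)
    (ht : ∀ k ≥ 1, |t k - ρ k| ≤ 0.2 * ρ k) :
    ∃ m : ℂ → ℂ, TendstoLocallyUniformlyOn
      (fun N z => ∏ k ∈ Finset.Icc 1 N, (1 - z / (ρ k : ℂ)) / (1 - z / (t k : ℂ)))
      m atTop {z : ℂ | ∀ k ≥ 1, z ≠ (t k : ℂ)} := by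
  set U := {z : ℂ | ∀ k ≥ 1, z ≠ (t k : ℂ)}
  have hcont : ∀ j, ContinuousOn
      (fun z : ℂ => (1 - z / (ρ (j + 1) : ℂ)) / (1 - z / (t (j + 1) : ℂ))) U := by
    intro j
    have ht₀ : (t (j + 1) : ℂ) ≠ 0 := by
      exact_mod_cast (pos_of_abs_sub_le (hρ.pos _ (by omega)) (ht _ (by omega))).ne'
    refine ContinuousOn.div (by fun_prop) (by fun_prop) fun z hz => ?_
    rw [sub_ne_zero, ne_comm, Ne, div_eq_one_iff_eq ht₀]
    exact hz (j + 1) (by omega)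
  have hbound : ∀ K ⊆ U, IsCompact K → ∃ u : ℕ → ℝ, Summable u ∧ ∀ᶠ j in atTop, ∀ z ∈ K,
      ‖(1 - z / (ρ (j + 1) : ℂ)) / (1 - z / (t (j + 1) : ℂ)) - 1‖ ≤ u j := by
    intro K _ hK
    obtain ⟨R, hR⟩ := hK.isBounded.exists_norm_le
    refine ⟨fun j => R / 2 * (ρ (j + 1))⁻¹,
      ((summable_nat_add_iff 1).2 hρ.summable_inv).mul_left _, ?_⟩
    filter_upwards [((tendsto_add_atTop_iff_nat 1).2 hρ.tendsto_atTop).eventually_ge_atTop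
      (8 * R / 3)] with j hj z hz
    have hr := hρ.pos (j + 1) (by omega)
    calc _ ≤ ‖z‖ / (2 * ρ (j + 1)) :=
          norm_factor_sub_one_le hr (ht _ (by omega)) (by linarith [hR z hz])
      _ ≤ R / (2 * ρ (j + 1)) := by gcongr; exact hR z hz
      _ = R / 2 * (ρ (j + 1))⁻¹ := by ring
  refine ⟨_, (tendstoLocallyUniformlyOn_prod_range (hρ.isOpen_setOf_forall_ne ht) hcont
    hbound).congr fun N z _ => ?_⟩
  dsimp only
  rw [range_eq_Ico, prod_Ico_add' (fun k => (1 - z / (ρ k : ℂ)) / (1 - z / (t k : ℂ))),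
    zero_add, Finset.Ico_add_one_right_eq_Icc]

variable {z : ℂ}

theorem norm_prod_Icc_mem_Icc (hρ : IsLacunary ρ) (ht : ∀ k ≥ 1, |t k - ρ k| ≤ 0.2 * ρ k)
    (hprod : ∀ n, ∏ k ∈ Finset.Icc 1 n, t k / ρ k ∈ Set.Icc (0.001 : ℝ) 1000) {n : ℕ}
    (hz : 3 * ρ n ≤ 2 * ‖z‖) :
    ‖∏ k ∈ Finset.Icc 1 n, (1 - z / (ρ k : ℂ)) / (1 - z / (t k : ℂ))‖ ∈
      Set.Icc (0.001 * exp (-(3 * (4 / 3)))) (1000 * exp (4 / 3)) := by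
  have hmem : ∀ k ∈ Finset.Icc 1 n, 1 ≤ k ∧ 3 * ρ k ≤ 2 * ‖z‖ := fun k hk =>
    ⟨(mem_Icc.1 hk).1, by linarith [hρ.monotone (mem_Icc.1 hk).2]⟩
  rw [norm_prod, prod_congr rfl fun k hk =>
    norm_factor (hρ.pos k (hmem k hk).1) (pos_of_abs_sub_le (hρ.pos k (hmem k hk).1)
      (ht k (hmem k hk).1)), prod_mul_distrib]
  refine mul_mem_Icc_mul (by norm_num) (exp_pos _).le (hprod n)
    (prod_mem_Icc_exp (δ := fun k => ρ k / ‖z‖) (fun k hk => ?_) (fun k hk => ?_) ?_)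
  · exact abs_norm_ratio_sub_one_le (hρ.pos k (hmem k hk).1) (ht k (hmem k hk).1) (hmem k hk).2
  · exact div_le_of_le_mul₀ (norm_nonneg _) (by norm_num) (by linarith [(hmem k hk).2])
  · rw [← sum_div]
    exact div_le_of_le_mul₀ (norm_nonneg _) (by norm_num) (by linarith [hρ.sum_Icc_le n])

theorem norm_prod_Ioc_mem_Icc (hρ : IsLacunary ρ) (ht : ∀ k ≥ 1, |t k - ρ k| ≤ 0.2 * ρ k)
    {m : ℕ} (hm : 1 ≤ m) (hz : 4 * ‖z‖ ≤ 3 * ρ m) (N : ℕ) :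
    ‖∏ k ∈ Ioc m N, (1 - z / (ρ k : ℂ)) / (1 - z / (t k : ℂ))‖ ∈
      Set.Icc (exp (-(3 * (3 / 8)))) (exp (3 / 8)) := by
  have hmem : ∀ k ∈ Ioc m N, 1 ≤ k ∧ 8 * ‖z‖ ≤ 3 * ρ k := fun k hk => by
    have hmk := (mem_Ioc.1 hk).1
    exact ⟨by omega, by linarith [hρ.monotone hmk, hρ.two_mul_le_succ m]⟩
  rw [norm_prod]
  refine prod_mem_Icc_exp (δ := fun k => ‖z‖ / (2 * ρ k)) (fun k hk => ?_) (fun k hk => ?_) ?_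
  · have h := abs_norm_sub_norm_le ((1 - z / (ρ k : ℂ)) / (1 - z / (t k : ℂ))) 1
    rw [norm_one] at h
    exact h.trans <|
      norm_factor_sub_one_le (hρ.pos k (hmem k hk).1) (ht k (hmem k hk).1) (hmem k hk).2
  · have := hρ.pos k (hmem k hk).1
    exact div_le_of_le_mul₀ (by positivity) (by norm_num) (by linarith [(hmem k hk).2])
  · have hm₀ := hρ.pos m hm
    calc ∑ k ∈ Ioc m N, ‖z‖ / (2 * ρ k) = ‖z‖ / 2 * ∑ k ∈ Ioc m N, (ρ k)⁻¹ := by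
          rw [mul_sum]
          exact sum_congr rfl fun k _ => by ring
      _ ≤ ‖z‖ / 2 * (ρ m)⁻¹ := by gcongr; exact hρ.sum_Ioc_inv_le hm N
      _ ≤ 3 / 8 := by
          rw [← div_eq_mul_inv, div_le_iff₀ hm₀]
          linarith

theorem ne_of_mem_annulus (hρ : IsLacunary ρ) (ht : ∀ k ≥ 1, |t k - ρ k| ≤ 0.2 * ρ k) {k : ℕ}
    (hk : 1 ≤ k) (hlow : 3 * ρ (k - 1) ≤ 2 * ‖z‖) (hup : 4 * ‖z‖ ≤ 3 * ρ (k + 1))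
    (hzk : z ≠ (t k : ℂ)) : ∀ j ≥ 1, z ≠ (t j : ℂ) := by
  intro j hj hzj
  have hnorm : ‖z‖ = t j := by
    rw [hzj, Complex.norm_real, Real.norm_of_nonneg (pos_of_abs_sub_le (hρ.pos j hj) (ht j hj)).le]
  have htj := abs_le.1 (ht j hj)
  rcases lt_trichotomy j k with hjk | rfl | hjk
  · linarith [hρ.monotone (show j ≤ k - 1 by omega), hρ.pos (k - 1) (by omega)]
  · exact hzk hzj
  · linarith [hρ.monotone (show k + 1 ≤ j by omega), hρ.pos (k + 1) (by omega)]

theorem norm_prod_Icc_mem_Icc_of_mem_annulus (hρ : IsLacunary ρ)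
    (ht : ∀ k ≥ 1, |t k - ρ k| ≤ 0.2 * ρ k)
    (hprod : ∀ n, ∏ k ∈ Finset.Icc 1 n, t k / ρ k ∈ Set.Icc (0.001 : ℝ) 1000) {k N : ℕ}
    (hk : 1 ≤ k) (hN : k + 1 ≤ N) (hlow : 3 * ρ (k - 1) ≤ 2 * ‖z‖)
    (hup : 4 * ‖z‖ ≤ 3 * ρ (k + 1)) :
    ‖∏ j ∈ Finset.Icc 1 N, (1 - z / (ρ j : ℂ)) / (1 - z / (t j : ℂ))‖ ∈
      Set.Icc (0.001 * exp (-4) * 0.8 * (1 / 10) * exp (-(9 / 8)) *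
          (‖z - (ρ k : ℂ)‖ / ‖z - (t k : ℂ)‖))
        (1000 * exp (4 / 3) * 1.2 * 42 * exp (3 / 8) * (‖z - (ρ k : ℂ)‖ / ‖z - (t k : ℂ)‖)) := by
  obtain ⟨n, rfl⟩ : ∃ n, k = n + 1 := ⟨k - 1, by omega⟩
  rw [Nat.add_sub_cancel] at hlow
  set a : ℕ → ℂ := fun j => (1 - z / (ρ j : ℂ)) / (1 - z / (t j : ℂ))
  have hsplit : ∏ j ∈ Finset.Icc 1 N, a j =
      (∏ j ∈ Finset.Icc 1 n, a j) * a (n + 1) * a (n + 2) * ∏ j ∈ Ioc (n + 2) N, a j := by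
    have hIoc : ∀ m, Finset.Icc 1 m = Ioc 0 m := fun m => Finset.Icc_add_one_left_eq_Ioc 0 m
    rw [hIoc, hIoc, ← prod_Ioc_consecutive _ (by omega : 0 ≤ n + 2) hN,
      prod_Ioc_succ_top (by omega : 0 ≤ n + 1), prod_Ioc_succ_top (by omega : 0 ≤ n)]
  have hinner := hρ.norm_prod_Icc_mem_Icc ht hprod hlow
  have hown := norm_factor_mem_Icc_mul (z := z) (hρ.pos (n + 1) (by omega)) (ht (n + 1) (by omega))
  have hnext := norm_factor_mem_Icc (hρ.pos (n + 2) (by omega)) (ht (n + 2) (by omega)) hup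
  have houter := hρ.norm_prod_Ioc_mem_Icc ht (m := n + 2) (by omega) hup N
  rw [hsplit, norm_mul, norm_mul, norm_mul]
  have hall := mul_mem_Icc_mul (by positivity) (by positivity)
    (mul_mem_Icc_mul (by positivity) (by norm_num)
      (mul_mem_Icc_mul (by positivity) (by positivity) hinner hown) hnext) houter
  convert hall using 1
  congr 1 <;> norm_num <;> ring

end IsLacunary

/-- **Convergence and size of the auxiliary product `m`.**
For a lacunary sequence `ρ_k` and points `t_k` with `|t_k - ρ_k| ≤ 0.2 ρ_k` whose partial
products `∏ t_k/ρ_k` stay between `0.001` and `1000`, the product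
`m(z) = ∏ (1 - z/ρ_k)/(1 - z/t_k)` converges locally uniformly off `{t_k}` and satisfies
`|m(z)| ≍ |z - ρ_k|/|z - t_k|` on the annulus `(ρ_{k-1}+ρ_k)/2 ≤ |z| ≤ (ρ_k+ρ_{k+1})/2`
(with `ρ₀ := 0`). -/
theorem stmt2 (ρ t : ℕ → ℝ) (hρ0 : ρ 0 = 0)
    (hρpos : ∀ k ≥ 1, 0 < ρ k)
    (hρlac : ∀ k ≥ 1, 2 * ρ k ≤ ρ (k + 1))
    (ht : ∀ k ≥ 1, |t k - ρ k| ≤ 0.2 * ρ k)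
    (hprod : ∀ N ≥ 1, (0.001 : ℝ) ≤ ∏ k ∈ Finset.Icc 1 N, t k / ρ k ∧
      ∏ k ∈ Finset.Icc 1 N, t k / ρ k ≤ 1000) :
    ∃ m : ℂ → ℂ,
      TendstoLocallyUniformlyOn
        (fun N : ℕ => fun z : ℂ =>
          ∏ k ∈ Finset.Icc 1 N, (1 - z / (ρ k : ℂ)) / (1 - z / (t k : ℂ)))
        m atTop {z : ℂ | ∀ k ≥ 1, z ≠ (t k : ℂ)} ∧
      ∃ c > (0:ℝ), ∃ C > (0:ℝ), ∀ k ≥ 1, ∀ z : ℂ,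
        (ρ (k - 1) + ρ k) / 2 ≤ ‖z‖ → ‖z‖ ≤ (ρ k + ρ (k + 1)) / 2 → z ≠ (t k : ℂ) →
          c * (‖z - (ρ k : ℂ)‖ / ‖z - (t k : ℂ)‖) ≤ ‖m z‖ ∧
          ‖m z‖ ≤ C * (‖z - (ρ k : ℂ)‖ / ‖z - (t k : ℂ)‖) := by
  have hρ : IsLacunary ρ := ⟨hρ0, hρpos, hρlac⟩
  have hprod' : ∀ n, ∏ k ∈ Finset.Icc 1 n, t k / ρ k ∈ Set.Icc (0.001 : ℝ) 1000 := by
    intro n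
    rcases Nat.eq_zero_or_pos n with rfl | hn
    · norm_num
    · exact hprod n hn
  obtain ⟨m, hm⟩ := hρ.exists_tendstoLocallyUniformlyOn_prod ht
  refine ⟨m, hm, 0.001 * exp (-4) * 0.8 * (1 / 10) * exp (-(9 / 8)), by positivity,
    1000 * exp (4 / 3) * 1.2 * 42 * exp (3 / 8), by positivity, fun k hk z hz₁ hz₂ hzk => ?_⟩
  have hlow : 3 * ρ (k - 1) ≤ 2 * ‖z‖ := by
    have := hρ.two_mul_le_succ (k - 1)
    rw [Nat.sub_add_cancel hk] at this
    linarith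
  have hup : 4 * ‖z‖ ≤ 3 * ρ (k + 1) := by linarith [hρlac k hk]
  exact isClosed_Icc.mem_of_tendsto (hm.tendsto_at (hρ.ne_of_mem_annulus ht hk hlow hup hzk)).norm
    (eventually_atTop.2 ⟨k + 1, fun N hN =>
      hρ.norm_prod_Icc_mem_Icc_of_mem_annulus ht hprod' hk hN hlow hup⟩)
end

section
/- Let (ρ_k)_{k≥1}, (d_k)_{k≥1} be positive reals with 2ρ_k ≤ ρ_{k+1} and d_k ≤ 0.1ρ_k, set I_k = [ρ_k − d_k, ρ_k + d_k], and assume dist(ρ_k, ℤ) ≥ 1/3 for all k. Let (a_n)_{n∈ℤ} be real numbers with a_0 ≠ 0, and suppose there are constants 0 < c₁ ≤ c₂ such that for all indices k and all m ≠ k: c₁/(d_k·ρ_k) ≤ Σ_{n∈I_k∩ℤ} a_n²/(ρ_k − n)² ≤ c₂/(d_k·ρ_k); Σ_{n∈I_m∩ℤ} a_n²/(|ρ_k − n|·|ρ_m − n|) ≤ c₂/(ρ_k·ρ_m); and Σ_{n∈I_k∩ℤ} a_n²/|ρ_k − n| ≤ c₂/ρ_k. Then there exists ε > 0 depending only on c₁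 and c₂ with the following property: if Σ_k d_k/ρ_k ≤ ε, then there exists a real sequence (b_n)_{n∈ℤ} ∈ ℓ²(ℤ) vanishing outside {0} ∪ ⋃_k (I_k ∩ ℤ) such that the sequence (a_n b_n)_{n∈ℤ} is absolutely summable, Σ_{n∈ℤ} a_n b_n ≠ 0, and Σ_{n∈ℤ} a_n b_n/(ρ_k − n) = 0 for every k. -/
/-!
Look for `b` of the form `b 0 = (a 0)⁻¹` and `b n = d m * u m * a n / (ρ m - n)` on `I_m ∩ ℤ`;
the intervals are disjoint by lacunarity. Then
`∑ n, a n * b n / (ρ k - n) = 1 / ρ k + ∑ m, d m * u m * G k m` with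
`G k m = ∑_{n ∈ I_m} a n ^ 2 / ((ρ k - n) * (ρ m - n))`, so the orthogonality relations are a
linear system for `u`. It is diagonally dominant: `d k * G k k ≥ c₁ / ρ k`, while the
off-diagonal part of row `k` is at most `c₂ / ρ k * ∑ m, d m / ρ m ≤ c₁ / (4 * ρ k)` for
`ε = c₁ / (4 * c₂)`. A contraction argument in `ℓ^∞` gives a solution with
`|u m| ≤ 4 / (3 * c₁)`, and the upper bounds then give `b ∈ ℓ²`, `a * b ∈ ℓ¹` and
`|∑ n, a n * b n - 1| ≤ 1 / 3`.
-/

open scoped Classical ENNReal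
open Function

theorem hasSum_of_pairwise_disjoint_blocks {α ι : Type*} {N : ι → Finset α}
    (hN : Pairwise (Disjoint on N)) {f : α → ℝ} (hf : ∀ x, (∀ i, x ∉ N i) → f x = 0)
    (habs : Summable fun i => ∑ x ∈ N i, |f x|) :
    HasSum f (∑' i, ∑ x ∈ N i, f x) := by
  let t : ι → Set α := fun i => N i
  let e : (Σ i, t i) → α := Subtype.val ∘ Set.sigmaToiUnion t
  have he : e.Injective := Subtype.val_injective.comp <| Set.sigmaToiUnion_injective t
    fun i j hij => Finset.disjoint_coe.2 (hN hij)
  have hrange : ∀ x ∉ Set.range e, f x = 0 := fun x hx => hf x fun i hi => hx ⟨⟨i, x, hi⟩, rfl⟩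
  have hsummable : Summable (f ∘ e) := by
    refine Summable.of_abs ((summable_sigma_of_nonneg fun _ => abs_nonneg _).2
      ⟨fun _ => .of_finite, ?_⟩)
    exact habs.congr fun i => ((N i).tsum_subtype' fun x => |f x|).symm
  have hblocks : Summable fun i => ∑ x ∈ N i, f x :=
    habs.of_norm_bounded fun i => Finset.abs_sum_le_sum_abs _ _
  exact (he.hasSum_iff hrange).1 <|
    hblocks.hasSum.sigma_of_hasSum (fun i => (N i).hasSum f) hsummable

theorem hasSum_add_of_pairwise_disjoint_blocks {α ι : Type*} {N : ι → Finset α} (x₀ : α)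
    (hN : Pairwise (Disjoint on N)) (hx₀ : ∀ i, x₀ ∉ N i) {f : α → ℝ}
    (hf : ∀ x ≠ x₀, (∀ i, x ∉ N i) → f x = 0) {B : ι → ℝ} (hB : Summable B)
    (hfB : ∀ i, ∑ x ∈ N i, |f x| ≤ B i) :
    HasSum f (f x₀ + ∑' i, ∑ x ∈ N i, f x) := by
  let g : α → ℝ := fun x => if x = x₀ then 0 else f x
  have hg : ∀ i, ∀ x ∈ N i, g x = f x := fun i x hx =>
    if_neg fun h : x = x₀ => hx₀ i (h ▸ hx)
  have hrest : HasSum g (∑' i, ∑ x ∈ N i, f x) := by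
    have habs : Summable fun i => ∑ x ∈ N i, |g x| :=
      hB.of_nonneg_of_le (fun i => Finset.sum_nonneg fun _ _ => abs_nonneg _) fun i =>
        (Finset.sum_congr rfl fun x hx => by rw [hg i x hx]).trans_le (hfB i)
    convert hasSum_of_pairwise_disjoint_blocks hN (f := g) (fun x hx => ?_) habs using 1
    · exact tsum_congr fun i => (Finset.sum_congr rfl (hg i)).symm
    · by_cases h : x = x₀
      · exact if_pos h
      · exact (if_neg h).trans (hf x h hx)
  convert (hasSum_ite_eq x₀ (f x₀)).add hrest using 1
  ext x
  by_cases h : x = x₀ <;> simp [g, h]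

theorem summable_mul_of_abs_le {ι : Type*} {k x : ι → ℝ} {M : ℝ}
    (hk : Summable fun j => |k j|) (hx : ∀ j, |x j| ≤ M) : Summable fun j => k j * x j :=
  (hk.mul_right M).of_norm_bounded fun j => by
    rw [Real.norm_eq_abs, abs_mul]; exact mul_le_mul_of_nonneg_left (hx j) (abs_nonneg _)

theorem abs_tsum_mul_le {ι : Type*} {k x : ι → ℝ} {M : ℝ}
    (hk : Summable fun j => |k j|) (hx : ∀ j, |x j| ≤ M) :
    |∑' j, k j * x j| ≤ (∑' j, |k j|) * M :=
  tsum_of_norm_bounded (hk.hasSum.mul_right M) fun j => by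
    rw [Real.norm_eq_abs, abs_mul]; exact mul_le_mul_of_nonneg_left (hx j) (abs_nonneg _)

theorem exists_bounded_eq_add_tsum_mul {ι : Type*} (K : ι → ι → ℝ) (v : ι → ℝ) {q V : ℝ}
    (hq₀ : 0 ≤ q) (hq : q < 1) (hV : 0 ≤ V) (hv : ∀ i, |v i| ≤ V)
    (hK : ∀ i, Summable fun j => |K i j|) (hKq : ∀ i, ∑' j, |K i j| ≤ q) :
    ∃ u : ι → ℝ, (∀ i, |u i| ≤ V / (1 - q)) ∧ ∀ i, u i = v i + ∑' j, K i j * u j := by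
  have hcoord : ∀ (x : lp (fun _ : ι => ℝ) ∞) j, |x j| ≤ ‖x‖ :=
    lp.norm_apply_le_norm ENNReal.top_ne_zero
  have hKx : ∀ (x : lp (fun _ : ι => ℝ) ∞) i, |∑' j, K i j * x j| ≤ q * ‖x‖ := fun x i =>
    (abs_tsum_mul_le (hK i) (hcoord x)).trans
      (mul_le_mul_of_nonneg_right (hKq i) (norm_nonneg x))
  have hTx : ∀ (x : lp (fun _ : ι => ℝ) ∞) i, |v i + ∑' j, K i j * x j| ≤ V + q * ‖x‖ :=
    fun x i => (abs_add_le _ _).trans (add_le_add (hv i) (hKx x i))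
  let T : lp (fun _ : ι => ℝ) ∞ → lp (fun _ : ι => ℝ) ∞ := fun x =>
    ⟨fun i => v i + ∑' j, K i j * x j, memℓp_infty ⟨V + q * ‖x‖, by
      rintro _ ⟨i, rfl⟩; exact hTx x i⟩⟩
  have hT : ContractingWith ⟨q, hq₀⟩ T := by
    refine ⟨hq, LipschitzWith.of_dist_le_mul fun x y => ?_⟩
    rw [dist_eq_norm, dist_eq_norm]
    refine lp.norm_le_of_forall_le (mul_nonneg hq₀ (norm_nonneg _)) fun i => ?_
    have hsub : (T x - T y) i = ∑' j, K i j * (x - y) j := by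
      simp only [lp.coeFn_sub, Pi.sub_apply, mul_sub, T]
      rw [Summable.tsum_sub]
      · ring
      all_goals exact summable_mul_of_abs_le (hK i) (hcoord _)
    rw [hsub]
    exact hKx (x - y) i
  set u := ContractingWith.fixedPoint T hT
  have hu : ∀ i, u i = v i + ∑' j, K i j * u j := fun i =>
    congrFun (congrArg (⇑) (ContractingWith.fixedPoint_isFixedPt hT).symm) i
  have hnorm : ‖u‖ ≤ V + q * ‖u‖ :=
    lp.norm_le_of_forall_le (by positivity) fun i => (hu i).symm ▸ hTx u i
  refine ⟨u, fun i => ?_, hu⟩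
  rw [le_div_iff₀ (sub_pos.2 hq)]
  nlinarith [hcoord u i]

theorem exists_bounded_solution_of_diag_dominant {ι : Type*} (G : ι → ι → ℝ) {ρ d : ι → ℝ}
    {c₁ c₂ q : ℝ} (hρ : ∀ k, 0 < ρ k) (hd : ∀ k, 0 < d k) (hc₁ : 0 < c₁) (hc₂ : 0 ≤ c₂)
    (hq : q < 1) (hdiag : ∀ k, c₁ / (d k * ρ k) ≤ G k k)
    (hoff : ∀ k m, m ≠ k → |G k m| ≤ c₂ / (ρ k * ρ m))
    (hsum : Summable fun m => d m / ρ m) (hsmall : c₂ * ∑' m, d m / ρ m ≤ q * c₁) :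
    ∃ u : ι → ℝ, (∀ m, |u m| ≤ c₁⁻¹ / (1 - q)) ∧
      ∀ k, HasSum (fun m => d m * u m * G k m) (-(ρ k)⁻¹) := by
  have hq₀ : 0 ≤ q := by
    have : 0 ≤ c₂ * ∑' m, d m / ρ m :=
      mul_nonneg hc₂ (tsum_nonneg fun m => (div_pos (hd m) (hρ m)).le)
    nlinarith
  have hD : ∀ k, c₁ ≤ ρ k * (d k * G k k) := fun k => by
    have := hdiag k
    rw [div_le_iff₀ (mul_pos (hd k) (hρ k))] at this
    linarith
  have hGpos : ∀ k, 0 < G k k := fun k =>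
    (div_pos hc₁ (mul_pos (hd k) (hρ k))).trans_le (hdiag k)
  have hDpos : ∀ k, 0 < d k * G k k := fun k => mul_pos (hd k) (hGpos k)
  -- row `k` of `∑ m, d m * G k m * u m = -1 / ρ k`, solved for `u k`, reads `u = v + K u`
  let K : ι → ι → ℝ := fun k m => if m = k then 0 else -(d m * G k m) / (d k * G k k)
  let v : ι → ℝ := fun k => -1 / (ρ k * (d k * G k k))
  have hv : ∀ k, |v k| ≤ c₁⁻¹ := fun k => by
    rw [abs_div, abs_neg, abs_one, abs_of_pos (mul_pos (hρ k) (hDpos k)), ← one_div]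
    exact one_div_le_one_div_of_le hc₁ (hD k)
  have hK : ∀ k m, |K k m| ≤ c₂ / c₁ * (d m / ρ m) := fun k m => by
    by_cases hm : m = k
    · simp only [K, if_pos hm, abs_zero]
      exact mul_nonneg (div_nonneg hc₂ hc₁.le) (div_pos (hd m) (hρ m)).le
    · simp only [K, if_neg hm, abs_div, abs_neg, abs_mul, abs_of_pos (hd m),
        abs_of_pos (hDpos k)]
      rw [div_le_iff₀ (hDpos k)]
      calc d m * |G k m| ≤ d m * (c₂ / (ρ k * ρ m)) :=
            mul_le_mul_of_nonneg_left (hoff k m hm) (hd m).le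
        _ = c₂ / c₁ * (d m / ρ m) * (c₁ / ρ k) := by
            field_simp [(hρ k).ne', (hρ m).ne', hc₁.ne']
        _ ≤ c₂ / c₁ * (d m / ρ m) * (d k * G k k) := by
            refine mul_le_mul_of_nonneg_left ?_ ?_
            · rw [div_le_iff₀ (hρ k)]; linarith [hD k]
            · exact mul_nonneg (div_nonneg hc₂ hc₁.le) (div_pos (hd m) (hρ m)).le
  have hKs : ∀ k, Summable fun m => |K k m| := fun k =>
    (hsum.mul_left _).of_nonneg_of_le (fun m => abs_nonneg _) (hK k)
  have hKq : ∀ k, ∑' m, |K k m| ≤ q := fun k => by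
    refine ((hKs k).tsum_le_tsum (hK k) (hsum.mul_left _)).trans ?_
    rw [tsum_mul_left, div_mul_eq_mul_div, div_le_iff₀ hc₁]
    exact hsmall
  obtain ⟨u, hu, hfix⟩ := exists_bounded_eq_add_tsum_mul K v hq₀ hq (inv_nonneg.2 hc₁.le) hv
    hKs hKq
  refine ⟨u, hu, fun k => ?_⟩
  have hsplit : (fun m => d m * u m * G k m) = fun m =>
      (if m = k then d k * G k k * u k else 0) + -(d k * G k k) * (K k m * u m) := by
    funext m
    by_cases hm : m = k
    · subst hm
      simp only [K, ↓reduceIte, zero_mul, mul_zero, add_zero]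
      ring
    · simp only [K, if_neg hm, zero_add]
      field_simp [(hd k).ne', (hGpos k).ne']
  have hval : d k * G k k * u k + -(d k * G k k) * ∑' m, K k m * u m = -(ρ k)⁻¹ := by
    rw [hfix k]
    simp only [v]
    field_simp [(hρ k).ne', (hd k).ne', (hGpos k).ne']
    ring
  rw [hsplit, ← hval]
  exact (hasSum_ite_eq k _).add ((summable_mul_of_abs_le (hKs k) hu).hasSum.mul_left _)

theorem finsum_ite_intCast_mem_Icc (g : ℤ → ℝ) (x y : ℝ) :
    (∑ᶠ n : ℤ, if (n : ℝ) ∈ Set.Icc x y then g n else 0) = ∑ n ∈ Finset.Icc ⌈x⌉ ⌊y⌋, g n := by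
  have hmem : ∀ n : ℤ, (n : ℝ) ∈ Set.Icc x y ↔ n ∈ Finset.Icc ⌈x⌉ ⌊y⌋ := by
    simp [Int.ceil_le, Int.le_floor]
  simp_rw [hmem]
  rw [finsum_eq_sum_of_support_subset _ (s := Finset.Icc ⌈x⌉ ⌊y⌋)
    (support_subset_iff'.2 fun n hn => if_neg (Finset.mem_coe.not.1 hn)), Finset.sum_ite_mem,
    Finset.inter_self]

theorem pairwise_disjoint_Icc_ceil_floor_of_lacunary {ρ d : ℕ → ℝ} (hρ : ∀ k, 0 < ρ k)
    (hρ₂ : ∀ k, 2 * ρ k ≤ ρ (k + 1)) (hd : ∀ k, d k ≤ 0.1 * ρ k) :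
    Pairwise (Disjoint on fun k => Finset.Icc ⌈ρ k - d k⌉ ⌊ρ k + d k⌋) := by
  have hmono : Monotone ρ := monotone_nat_of_le_succ fun k => by linarith [hρ k, hρ₂ k]
  refine (pairwise_disjoint_on _).2 fun k m hkm => Finset.disjoint_left.2 fun n hk hm => ?_
  simp only [Finset.mem_Icc, Int.ceil_le, Int.le_floor] at hk hm
  have : 2 * ρ k ≤ ρ m := (hρ₂ k).trans (hmono hkm)
  linarith [hk.2, hm.1, hd k, hd m, hρ k]

theorem zero_notMem_Icc_ceil_floor {x r : ℝ} (hr : r < x) : (0 : ℤ) ∉ Finset.Icc ⌈x - r⌉ ⌊x + r⌋ :=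
  fun h => (Int.ceil_pos.2 (sub_pos.2 hr)).not_ge (Finset.mem_Icc.1 h).1

section Ansatz

variable (ρ : ℕ → ℝ) (a : ℤ → ℝ) (N : ℕ → Finset ℤ)

noncomputable def gram (k m : ℕ) : ℝ := ∑ n ∈ N m, a n ^ 2 / ((ρ k - n) * (ρ m - n))

-- The blocks `N m` will be disjoint, so the `tsum` has at most one nonzero term.
noncomputable def ansatz (c : ℕ → ℝ) (n : ℤ) : ℝ :=
  if n = 0 then (a 0)⁻¹ else ∑' m, if n ∈ N m then c m * a n / (ρ m - n) else 0

variable {ρ a N} {c : ℕ → ℝ}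

theorem gram_self (k : ℕ) : gram ρ a N k k = ∑ n ∈ N k, a n ^ 2 / (ρ k - n) ^ 2 := by
  simp only [gram, sq]

theorem abs_gram_le (k m : ℕ) :
    |gram ρ a N k m| ≤ ∑ n ∈ N m, a n ^ 2 / (|ρ k - n| * |ρ m - n|) :=
  (Finset.abs_sum_le_sum_abs _ _).trans_eq <| Finset.sum_congr rfl fun n _ => by
    rw [abs_div, abs_mul, abs_sq]

theorem ansatz_zero : ansatz ρ a N c 0 = (a 0)⁻¹ := if_pos rfl

theorem ansatz_of_forall_notMem {n : ℤ} (hn₀ : n ≠ 0) (hn : ∀ m, n ∉ N m) :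
    ansatz ρ a N c n = 0 := by
  simp [ansatz, hn₀, hn]

theorem ansatz_of_mem (hN : Pairwise (Disjoint on N)) (h0 : ∀ m, 0 ∉ N m) {k : ℕ} {n : ℤ}
    (hn : n ∈ N k) : ansatz ρ a N c n = c k * a n / (ρ k - n) := by
  rw [ansatz, if_neg fun h : n = 0 => h0 k (h ▸ hn), tsum_eq_single k fun m hm =>
    if_neg fun hm' => Finset.disjoint_left.1 (hN hm) hm' hn, if_pos hn]

theorem sum_ansatz_sq (hN : Pairwise (Disjoint on N)) (h0 : ∀ m, 0 ∉ N m) (m : ℕ) :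
    ∑ n ∈ N m, ansatz ρ a N c n ^ 2 = c m ^ 2 * ∑ n ∈ N m, a n ^ 2 / (ρ m - n) ^ 2 := by
  rw [Finset.mul_sum]
  refine Finset.sum_congr rfl fun n hn => ?_
  rw [ansatz_of_mem hN h0 hn, div_pow, mul_pow, mul_div_assoc]

theorem sum_abs_mul_ansatz (hN : Pairwise (Disjoint on N)) (h0 : ∀ m, 0 ∉ N m) (m : ℕ) :
    ∑ n ∈ N m, |a n * ansatz ρ a N c n| = |c m| * ∑ n ∈ N m, a n ^ 2 / |ρ m - n| := by
  rw [Finset.mul_sum]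
  refine Finset.sum_congr rfl fun n hn => ?_
  rw [ansatz_of_mem hN h0 hn, show a n * (c m * a n / (ρ m - n)) = c m * (a n ^ 2 / (ρ m - n)) by
    ring, abs_mul, abs_div, abs_sq]

theorem mul_ansatz_div_of_mem (hN : Pairwise (Disjoint on N)) (h0 : ∀ m, 0 ∉ N m) (k : ℕ)
    {m : ℕ} {n : ℤ} (hn : n ∈ N m) :
    a n * ansatz ρ a N c n / (ρ k - n) = c m * (a n ^ 2 / ((ρ k - n) * (ρ m - n))) := by
  rw [ansatz_of_mem hN h0 hn, mul_comm (ρ k - n), ← div_div]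
  ring

theorem sum_mul_ansatz_div (hN : Pairwise (Disjoint on N)) (h0 : ∀ m, 0 ∉ N m) (k m : ℕ) :
    ∑ n ∈ N m, a n * ansatz ρ a N c n / (ρ k - n) = c m * gram ρ a N k m := by
  rw [gram, Finset.mul_sum]
  exact Finset.sum_congr rfl fun n hn => mul_ansatz_div_of_mem hN h0 k hn

theorem sum_abs_mul_ansatz_div (hN : Pairwise (Disjoint on N)) (h0 : ∀ m, 0 ∉ N m) (k m : ℕ) :
    ∑ n ∈ N m, |a n * ansatz ρ a N c n / (ρ k - n)| =
      |c m| * ∑ n ∈ N m, a n ^ 2 / (|ρ k - n| * |ρ m - n|) := by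
  rw [Finset.mul_sum]
  refine Finset.sum_congr rfl fun n hn => ?_
  rw [mul_ansatz_div_of_mem hN h0 k hn, abs_mul, abs_div, abs_mul, abs_sq]

end Ansatz

section Estimates

variable {ρ d c : ℕ → ℝ} {a : ℤ → ℝ} {N : ℕ → Finset ℤ} {C c₂ : ℝ}

theorem summable_ansatz_sq (hN : Pairwise (Disjoint on N)) (h0 : ∀ m, 0 ∉ N m)
    (hρ : ∀ m, 0 < ρ m) (hd : ∀ m, 0 < d m) (hc : ∀ m, |c m| ≤ C * d m)
    (hup : ∀ m, ∑ n ∈ N m, a n ^ 2 / (ρ m - n) ^ 2 ≤ c₂ / (d m * ρ m))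
    (hsum : Summable fun m => d m / ρ m) :
    Summable fun n => ansatz ρ a N c n ^ 2 := by
  refine (hasSum_add_of_pairwise_disjoint_blocks 0 hN h0
    (fun n hn₀ hn => by rw [ansatz_of_forall_notMem hn₀ hn, sq, zero_mul])
    (hsum.mul_left (C ^ 2 * c₂)) fun m => ?_).summable
  simp_rw [abs_sq]
  rw [sum_ansatz_sq hN h0]
  calc c m ^ 2 * ∑ n ∈ N m, a n ^ 2 / (ρ m - n) ^ 2 ≤ (C * d m) ^ 2 * (c₂ / (d m * ρ m)) :=
        mul_le_mul (sq_le_sq.2 ((hc m).trans (le_abs_self _))) (hup m)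
          (Finset.sum_nonneg fun n _ => by positivity) (sq_nonneg _)
    _ = C ^ 2 * c₂ * (d m / ρ m) := by field_simp [(hd m).ne', (hρ m).ne']

theorem sum_abs_mul_ansatz_le (hN : Pairwise (Disjoint on N)) (h0 : ∀ m, 0 ∉ N m)
    (hc : ∀ m, |c m| ≤ C * d m) (hmom : ∀ m, ∑ n ∈ N m, a n ^ 2 / |ρ m - n| ≤ c₂ / ρ m)
    (m : ℕ) : ∑ n ∈ N m, |a n * ansatz ρ a N c n| ≤ C * c₂ * (d m / ρ m) := by
  rw [sum_abs_mul_ansatz hN h0]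
  calc |c m| * ∑ n ∈ N m, a n ^ 2 / |ρ m - n| ≤ C * d m * (c₂ / ρ m) :=
        mul_le_mul (hc m) (hmom m) (Finset.sum_nonneg fun n _ => by positivity)
          ((abs_nonneg _).trans (hc m))
    _ = C * c₂ * (d m / ρ m) := by ring

theorem hasSum_mul_ansatz (hN : Pairwise (Disjoint on N)) (h0 : ∀ m, 0 ∉ N m) (ha₀ : a 0 ≠ 0)
    (hc : ∀ m, |c m| ≤ C * d m) (hmom : ∀ m, ∑ n ∈ N m, a n ^ 2 / |ρ m - n| ≤ c₂ / ρ m)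
    (hsum : Summable fun m => d m / ρ m) :
    HasSum (fun n => a n * ansatz ρ a N c n) (1 + ∑' m, ∑ n ∈ N m, a n * ansatz ρ a N c n) := by
  have := hasSum_add_of_pairwise_disjoint_blocks 0 hN h0
    (fun n hn₀ hn => by rw [ansatz_of_forall_notMem hn₀ hn, mul_zero])
    (hsum.mul_left (C * c₂)) (sum_abs_mul_ansatz_le hN h0 hc hmom)
  rwa [ansatz_zero, mul_inv_cancel₀ ha₀] at this

theorem tsum_mul_ansatz_ne_zero (hN : Pairwise (Disjoint on N)) (h0 : ∀ m, 0 ∉ N m)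
    (ha₀ : a 0 ≠ 0) (hc : ∀ m, |c m| ≤ C * d m)
    (hmom : ∀ m, ∑ n ∈ N m, a n ^ 2 / |ρ m - n| ≤ c₂ / ρ m)
    (hsum : Summable fun m => d m / ρ m) (hsmall : C * c₂ * ∑' m, d m / ρ m < 1) :
    ∑' n, a n * ansatz ρ a N c n ≠ 0 := by
  rw [(hasSum_mul_ansatz hN h0 ha₀ hc hmom hsum).tsum_eq]
  have htail : |∑' m, ∑ n ∈ N m, a n * ansatz ρ a N c n| ≤ C * c₂ * ∑' m, d m / ρ m := by
    rw [← tsum_mul_left]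
    exact tsum_of_norm_bounded (f := fun m => ∑ n ∈ N m, a n * ansatz ρ a N c n)
      (hsum.mul_left _).hasSum fun m =>
      (Finset.abs_sum_le_sum_abs _ _).trans (sum_abs_mul_ansatz_le hN h0 hc hmom m)
  linarith [neg_abs_le (∑' m, ∑ n ∈ N m, a n * ansatz ρ a N c n)]

theorem hasSum_mul_ansatz_div_eq_zero (hN : Pairwise (Disjoint on N)) (h0 : ∀ m, 0 ∉ N m)
    (ha₀ : a 0 ≠ 0) (hd : ∀ m, 0 < d m) (hc : ∀ m, |c m| ≤ C * d m)
    (hup : ∀ m, ∑ n ∈ N m, a n ^ 2 / (ρ m - n) ^ 2 ≤ c₂ / (d m * ρ m)) {k : ℕ}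
    (hcross : ∀ m, m ≠ k →
      ∑ n ∈ N m, a n ^ 2 / (|ρ k - n| * |ρ m - n|) ≤ c₂ / (ρ k * ρ m))
    (hsum : Summable fun m => d m / ρ m)
    (hsys : HasSum (fun m => c m * gram ρ a N k m) (-(ρ k)⁻¹)) :
    HasSum (fun n => a n * ansatz ρ a N c n / (ρ k - n)) 0 := by
  have hblock : ∀ m, ∑ n ∈ N m, |a n * ansatz ρ a N c n / (ρ k - n)| ≤
      update (fun m => C * c₂ / ρ k * (d m / ρ m)) k (C * c₂ / ρ k) m := by
    intro m
    have hCd : 0 ≤ C * d m := (abs_nonneg _).trans (hc m)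
    have hS : 0 ≤ ∑ n ∈ N m, a n ^ 2 / (|ρ k - n| * |ρ m - n|) :=
      Finset.sum_nonneg fun n _ => by positivity
    rw [sum_abs_mul_ansatz_div hN h0, update_apply]
    by_cases hm : m = k
    · subst hm
      have hdiag : ∑ n ∈ N m, a n ^ 2 / (|ρ m - n| * |ρ m - n|) ≤ c₂ / (d m * ρ m) :=
        (Finset.sum_congr rfl fun n _ => by rw [abs_mul_abs_self, ← sq]).trans_le (hup m)
      calc |c m| * ∑ n ∈ N m, a n ^ 2 / (|ρ m - n| * |ρ m - n|) ≤ C * d m * (c₂ / (d m * ρ m)) :=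
            mul_le_mul (hc m) hdiag hS hCd
        _ = _ := by rw [if_pos rfl]; field_simp [(hd m).ne']
    · calc |c m| * ∑ n ∈ N m, a n ^ 2 / (|ρ k - n| * |ρ m - n|) ≤ C * d m * (c₂ / (ρ k * ρ m)) :=
            mul_le_mul (hc m) (hcross m hm) hS hCd
        _ = _ := by rw [if_neg hm]; ring
  have := hasSum_add_of_pairwise_disjoint_blocks 0 hN h0
    (fun n hn₀ hn => by rw [ansatz_of_forall_notMem hn₀ hn, mul_zero, zero_div])
    ((hsum.mul_left _).update k _) hblock
  rwa [tsum_congr (sum_mul_ansatz_div hN h0 k), hsys.tsum_eq, ansatz_zero, mul_inv_cancel₀ ha₀,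
    Int.cast_zero, sub_zero, one_div, add_neg_cancel] at this

end Estimates

/-- **Construction of the sequence `(b_n)` (fixed point argument).**
Given a lacunary family of intervals `I_k = [ρ_k - d_k, ρ_k + d_k]` with
`dist(ρ_k, ℤ) ≥ 1/3` and a real sequence `(a_n)` with `a_0 ≠ 0` satisfying the stated
two-sided bounds with constants `0 < c₁ ≤ c₂`, there is `ε > 0` depending only on
`c₁, c₂` such that if `∑ d_k/ρ_k ≤ ε` then one can find `(b_n) ∈ ℓ²(ℤ)` supported in
`{0} ∪ ⋃ (I_k ∩ ℤ)` with `(a_n b_n) ∈ ℓ¹`, `∑ a_n b_n ≠ 0` and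
`∑ a_n b_n/(ρ_k - n) = 0` for every `k`. -/
theorem stmt3 (c₁ c₂ : ℝ) (hc₁ : 0 < c₁) (hc₁₂ : c₁ ≤ c₂) :
    ∃ ε > (0:ℝ), ∀ (ρ d : ℕ → ℝ) (a : ℤ → ℝ),
      (∀ k, 0 < ρ k) → (∀ k, 2 * ρ k ≤ ρ (k + 1)) →
      (∀ k, 0 < d k) → (∀ k, d k ≤ 0.1 * ρ k) →
      (∀ k, ∀ n : ℤ, (1 : ℝ) / 3 ≤ |ρ k - n|) →
      a 0 ≠ 0 →
      -- lower and upper bounds for `∑_{n ∈ I_k} a_n²/(ρ_k - n)²`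
      (∀ k, c₁ / (d k * ρ k) ≤
        ∑ᶠ n : ℤ, (if (n : ℝ) ∈ Set.Icc (ρ k - d k) (ρ k + d k) then
          a n ^ 2 / (ρ k - n) ^ 2 else 0)) →
      (∀ k, (∑ᶠ n : ℤ, if (n : ℝ) ∈ Set.Icc (ρ k - d k) (ρ k + d k) then
          a n ^ 2 / (ρ k - n) ^ 2 else 0) ≤ c₂ / (d k * ρ k)) →
      -- cross terms
      (∀ k m : ℕ, m ≠ k →
        (∑ᶠ n : ℤ, if (n : ℝ) ∈ Set.Icc (ρ m - d m) (ρ m + d m) then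
          a n ^ 2 / (|ρ k - n| * |ρ m - n|) else 0) ≤ c₂ / (ρ k * ρ m)) →
      -- first moments
      (∀ k, (∑ᶠ n : ℤ, if (n : ℝ) ∈ Set.Icc (ρ k - d k) (ρ k + d k) then
          a n ^ 2 / |ρ k - n| else 0) ≤ c₂ / ρ k) →
      -- smallness of the total logarithmic length
      Summable (fun k => d k / ρ k) → (∑' k : ℕ, d k / ρ k) ≤ ε →
      ∃ b : ℤ → ℝ,
        Summable (fun n : ℤ => b n ^ 2) ∧
        (∀ n : ℤ, n ≠ 0 → (∀ k, (n : ℝ) ∉ Set.Icc (ρ k - d k) (ρ k + d k)) → b n = 0) ∧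
        Summable (fun n : ℤ => |a n * b n|) ∧
        (∑' n : ℤ, a n * b n) ≠ 0 ∧
        ∀ k, (∑' n : ℤ, a n * b n / (ρ k - n)) = 0 := by
  have hc₂ : 0 < c₂ := hc₁.trans_le hc₁₂
  refine ⟨c₁ / (4 * c₂), by positivity, ?_⟩
  intro ρ d a hρ hρ₂ hd hd₁ _ ha₀ hlow hup hcross hmom hsum hε
  simp only [finsum_ite_intCast_mem_Icc] at hlow hup hcross hmom
  let N : ℕ → Finset ℤ := fun k => Finset.Icc ⌈ρ k - d k⌉ ⌊ρ k + d k⌋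
  have hN : Pairwise (Disjoint on N) := pairwise_disjoint_Icc_ceil_floor_of_lacunary hρ hρ₂ hd₁
  have h0 : ∀ m, (0 : ℤ) ∉ N m := fun m =>
    zero_notMem_Icc_ceil_floor (by linarith [hd₁ m, hρ m])
  have hsmall : c₂ * ∑' m, d m / ρ m ≤ 1 / 4 * c₁ :=
    (mul_le_mul_of_nonneg_left hε hc₂.le).trans_eq (by field_simp)
  obtain ⟨u, hu, hsys⟩ := exists_bounded_solution_of_diag_dominant (gram ρ a N) hρ hd hc₁ hc₂.le
    (by norm_num) (fun k => (gram_self k).symm ▸ hlow k)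
    (fun k m hmk => (abs_gram_le k m).trans (hcross k m hmk)) hsum hsmall
  have hc : ∀ m, |d m * u m| ≤ c₁⁻¹ / (1 - 1 / 4) * d m := fun m => by
    rw [abs_mul, abs_of_pos (hd m), mul_comm]
    exact mul_le_mul_of_nonneg_right (hu m) (hd m).le
  have htail : c₁⁻¹ / (1 - 1 / 4) * c₂ * ∑' m, d m / ρ m < 1 := by
    rw [mul_assoc]
    calc _ ≤ c₁⁻¹ / (1 - 1 / 4) * (1 / 4 * c₁) :=
          mul_le_mul_of_nonneg_left hsmall (by positivity)
      _ < 1 := by field_simp; norm_num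
  refine ⟨ansatz ρ a N (fun m => d m * u m), summable_ansatz_sq hN h0 hρ hd hc hup hsum,
    fun n hn₀ hn => ansatz_of_forall_notMem hn₀ fun m hm => hn m ?_,
    summable_abs_iff.2 (hasSum_mul_ansatz hN h0 ha₀ hc hmom hsum).summable,
    tsum_mul_ansatz_ne_zero hN h0 ha₀ hc hmom hsum htail,
    fun k => (hasSum_mul_ansatz_div_eq_zero hN h0 ha₀ hd hc hup (hcross k) hsum (hsys k)).tsum_eq⟩
  simpa [N, Int.ceil_le, Int.le_floor] using hm
end

section
/- Let G(z) = cos(πz)·( 1/(z − 1/2) + Σ_{k=10}^∞ ( 1/(z − 2^k + 1/2) − 1/(z − 2^k − 1/2) ) ). Then there exist a constant c > 0 and K ∈ ℕ such that for every integer k ≥ K and every z ∈ ℂ with |z| = 2^k + 2^{k−1}, one has |G(z)| ≥ c·e^{π|Im z|}/|z|. -/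
/-!
On the circle `|z| = 3·2^(k-1)`, whose radius is an integer, `|cos πz| ≥ e^{π|Im z|}/6`: either
`|Im z|` is large and `|sinh(π Im z)|` dominates, or `|Re z|` is within `1/3` of an integer and
`|cos(π Re z)| ≥ 1/2`. The radius also stays at distance `≥ max(|z|, 2^m)/4` from every `2^m`, so
the `m`-th term of the series is `O(2^{-m}/|z|)` with a constant small enough that the series
cannot cancel the main term `1/(z - 1/2)`, which has size about `1/|z|`.
-/

open Real

namespace Complex

theorem norm_cos_sq (w : ℂ) : ‖cos w‖ ^ 2 = Real.cos w.re ^ 2 + Real.sinh w.im ^ 2 := by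
  have h := cos_add_mul_I (w.re : ℂ) w.im
  rw [re_add_im, ← ofReal_cos, ← ofReal_cosh, ← ofReal_sin, ← ofReal_sinh] at h
  rw [h, Complex.sq_norm, normSq_apply]
  simp only [sub_re, sub_im, mul_re, mul_im, ofReal_re, ofReal_im, I_re, I_im]
  nlinarith [Real.cosh_sq w.im, Real.sin_sq_add_cos_sq w.re]

theorem abs_cos_re_le_norm_cos (w : ℂ) : |Real.cos w.re| ≤ ‖cos w‖ :=
  abs_le_of_sq_le_sq' (by nlinarith [norm_cos_sq w, sq_nonneg (Real.sinh w.im)]) (norm_nonneg _)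
    |> abs_le.2

theorem abs_sinh_im_le_norm_cos (w : ℂ) : |Real.sinh w.im| ≤ ‖cos w‖ :=
  abs_le_of_sq_le_sq' (by nlinarith [norm_cos_sq w, sq_nonneg (Real.cos w.re)]) (norm_nonneg _)
    |> abs_le.2

end Complex

theorem Real.exp_le_four_mul_sinh {t : ℝ} (ht : 1 ≤ t) : exp t ≤ 4 * sinh t := by
  have h2 : 2 ≤ exp t := by linarith [add_one_le_exp t]
  have hmul : exp t * exp (-t) = 1 := by rw [← exp_add, add_neg_cancel, exp_zero]
  rw [sinh_eq]
  nlinarith [exp_pos (-t)]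

theorem half_le_abs_cos_pi_re (n : ℕ) {z : ℂ} (hz : ‖z‖ = n) (him : |z.im| ≤ 1 / 3) :
    1 / 2 ≤ |Real.cos (π * z.re)| := by
  set d := (n : ℝ) - |z.re| with hd_def
  have hd : 0 ≤ d := sub_nonneg.2 (hz ▸ Complex.abs_re_le_norm z)
  have hnorm : z.re ^ 2 + z.im ^ 2 = (n : ℝ) ^ 2 := by
    rw [← hz, Complex.sq_norm, Complex.normSq_apply]; ring
  have hd3 : d ≤ 1 / 3 := by
    have hprod : d * (n + |z.re|) = z.im ^ 2 := by
      rw [hd_def]; nlinarith [sq_abs z.re]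
    have hdd : d * d ≤ z.im ^ 2 := by nlinarith [abs_nonneg z.re]
    nlinarith [sq_abs z.im, abs_nonneg z.im]
  have hcos : Real.cos (π * z.re) = (-1) ^ n * Real.cos (π * d) := by
    rw [← Real.cos_abs, abs_mul, abs_of_pos pi_pos, ← cos_nat_mul_pi_sub, hd_def]
    ring_nf
  have hπd : 1 / 2 ≤ Real.cos (π * d) := by
    rw [← cos_pi_div_three]
    exact cos_le_cos_of_nonneg_of_le_pi (by positivity) (by linarith [pi_pos])
      (by nlinarith [pi_pos])
  rw [hcos, abs_mul, abs_pow, abs_neg, abs_one, one_pow, one_mul]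
  exact hπd.trans (le_abs_self _)

theorem exp_div_six_le_norm_cos_pi_mul (n : ℕ) {z : ℂ} (hz : ‖z‖ = n) :
    exp (π * |z.im|) / 6 ≤ ‖Complex.cos (π * z)‖ := by
  have hre : (π * z : ℂ).re = π * z.re := by simp
  have him : (π * z : ℂ).im = π * z.im := by simp
  rcases le_or_gt 1 (π * |z.im|) with hlarge | hsmall
  · calc exp (π * |z.im|) / 6 ≤ sinh (π * |z.im|) := by
          linarith [exp_le_four_mul_sinh hlarge, exp_pos (π * |z.im|)]
      _ = |sinh (π * z.im)| := by rw [abs_sinh, abs_mul, abs_of_pos pi_pos]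
      _ ≤ ‖Complex.cos (π * z)‖ := him ▸ Complex.abs_sinh_im_le_norm_cos _
  · have hexp : exp (π * |z.im|) < 3 := (exp_lt_exp.2 hsmall).trans exp_one_lt_three
    have him3 : |z.im| ≤ 1 / 3 := by
      rw [le_div_iff₀ (by norm_num)]; nlinarith [pi_gt_three, abs_nonneg z.im]
    calc exp (π * |z.im|) / 6 ≤ 1 / 2 := by linarith
      _ ≤ |Real.cos (π * z.re)| := half_le_abs_cos_pi_re n hz him3
      _ ≤ ‖Complex.cos (π * z)‖ := hre ▸ Complex.abs_cos_re_le_norm_cos _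

theorem max_le_four_mul_abs_three_mul_two_pow_sub_two_pow (j m : ℕ) :
    max (3 * 2 ^ j) (2 ^ m) ≤ 4 * |(3 * 2 ^ j : ℝ) - 2 ^ m| := by
  have hj : (0 : ℝ) < 2 ^ j := by positivity
  rcases lt_trichotomy m (j + 1) with hm | rfl | hm
  · have : (2 : ℝ) ^ m ≤ 2 ^ j := pow_le_pow_right₀ one_le_two (by omega)
    rw [abs_of_pos (by linarith)]
    exact max_le (by linarith) (by linarith)
  · rw [pow_succ, show (3 : ℝ) * 2 ^ j - 2 ^ j * 2 = 2 ^ j by ring, abs_of_pos hj]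
    exact max_le (by linarith) (by linarith)
  · have : (4 : ℝ) * 2 ^ j ≤ 2 ^ m := by
      rw [show m = j + 2 + (m - (j + 2)) by omega, pow_add, pow_add]
      nlinarith [one_le_pow₀ (M₀ := ℝ) one_le_two (n := m - (j + 2))]
    rw [abs_of_neg (by linarith)]
    exact max_le (by linarith) (by linarith)

theorem max_le_four_mul_norm_sub_two_pow {z : ℂ} {j : ℕ} (hz : ‖z‖ = 3 * 2 ^ j) (m : ℕ) :
    max ‖z‖ (2 ^ m) ≤ 4 * ‖z - 2 ^ m‖ := by
  have h := abs_norm_sub_norm_le z (2 ^ m)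
  rw [norm_pow, Complex.norm_ofNat, hz] at h
  rw [hz]
  linarith [max_le_four_mul_abs_three_mul_two_pow_sub_two_pow j m]

theorem ne_two_pow_add_half_and_ne_two_pow_sub_half {z : ℂ} {j : ℕ} (hz : ‖z‖ = 3 * 2 ^ j)
    (m : ℕ) : z ≠ 2 ^ m + 1 / 2 ∧ z ≠ 2 ^ m - 1 / 2 := by
  have hdist : 1 / 2 < ‖z - 2 ^ m‖ := by
    have := max_le_four_mul_norm_sub_two_pow hz m
    have := one_le_pow₀ (M₀ := ℝ) one_le_two (n := j)
    linarith [le_max_left ‖z‖ (2 ^ m)]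
  constructor <;> rintro rfl <;> norm_num at hdist

theorem norm_one_div_add_half_sub_one_div_sub_half_le {w : ℂ} (hw : 1 ≤ ‖w‖) :
    ‖1 / (w + 1 / 2) - 1 / (w - 1 / 2)‖ ≤ 2 / ‖w‖ ^ 2 := by
  have hw₀ : 0 < ‖w‖ := one_pos.trans_le hw
  have hplus : w + 1 / 2 ≠ 0 := by
    intro h; rw [eq_neg_of_add_eq_zero_left h] at hw; norm_num at hw
  have hminus : w - 1 / 2 ≠ 0 := by
    intro h; rw [sub_eq_zero.1 h] at hw; norm_num at hw
  have hden : ‖w‖ ^ 2 / 2 ≤ ‖w ^ 2 - 1 / 4‖ := by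
    have := norm_sub_norm_le (w ^ 2) (1 / 4)
    rw [norm_pow, show ‖(1 / 4 : ℂ)‖ = 1 / 4 by norm_num] at this
    nlinarith
  rw [div_sub_div _ _ hplus hminus, show 1 * (w - 1 / 2) - (w + 1 / 2) * 1 = -1 by ring,
    show (w + 1 / 2) * (w - 1 / 2) = w ^ 2 - 1 / 4 by ring, norm_div, norm_neg, norm_one,
    div_le_div_iff₀ ((div_pos (pow_pos hw₀ 2) two_pos).trans_le hden) (pow_pos hw₀ 2)]
  linarith

noncomputable def lacunarySum (z : ℂ) : ℂ :=
  ∑' k : ℕ, (1 / (z - 2 ^ (k + 10) + 1 / 2) - 1 / (z - 2 ^ (k + 10) - 1 / 2))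

theorem norm_lacunarySum_le {z : ℂ} {j : ℕ} (hz : ‖z‖ = 3 * 2 ^ j) :
    ‖lacunarySum z‖ ≤ 1 / (16 * ‖z‖) := by
  have hz₀ : 0 < ‖z‖ := by rw [hz]; positivity
  have hterm (m : ℕ) : ‖1 / (z - 2 ^ (m + 10) + 1 / 2) - 1 / (z - 2 ^ (m + 10) - 1 / 2)‖ ≤
      1 / (32 * ‖z‖) * (1 / 2) ^ m := by
    have hdist := max_le_four_mul_norm_sub_two_pow hz (m + 10)
    have hz4 : ‖z‖ ≤ 4 * ‖z - 2 ^ (m + 10)‖ := (le_max_left _ _).trans hdist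
    have hpow4 : (2 : ℝ) ^ (m + 10) ≤ 4 * ‖z - 2 ^ (m + 10)‖ := (le_max_right _ _).trans hdist
    have hpow : (2 : ℝ) ^ (m + 10) = 1024 * 2 ^ m := by ring
    have hm : (0 : ℝ) < 2 ^ m := by positivity
    have hw : 1 ≤ ‖z - 2 ^ (m + 10)‖ := by
      nlinarith [one_le_pow₀ (M₀ := ℝ) one_le_two (n := m)]
    have hsq : ‖z‖ * 2 ^ (m + 10) ≤ 16 * ‖z - 2 ^ (m + 10)‖ ^ 2 := by nlinarith
    refine (norm_one_div_add_half_sub_one_div_sub_half_le hw).trans ?_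
    rw [div_pow, one_pow, div_le_iff₀ (by positivity)]
    field_simp
    nlinarith
  calc ‖lacunarySum z‖ ≤ 1 / (32 * ‖z‖) * 2 :=
        tsum_of_norm_bounded (hasSum_geometric_two.mul_left _) hterm
    _ = 1 / (16 * ‖z‖) := by ring

theorem inv_two_mul_norm_le_norm_one_div_sub_half_add {z S : ℂ} (hz : 1 ≤ ‖z‖)
    (hS : ‖S‖ ≤ 1 / (16 * ‖z‖)) : 1 / (2 * ‖z‖) ≤ ‖1 / (z - 1 / 2) + S‖ := by
  have hz₀ : 0 < ‖z‖ := one_pos.trans_le hz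
  have hmain : 2 / (3 * ‖z‖) ≤ ‖1 / (z - 1 / 2)‖ := by
    have hle : ‖z - 1 / 2‖ ≤ 3 * ‖z‖ / 2 := by
      have := norm_sub_le z (1 / 2)
      rw [show ‖(1 / 2 : ℂ)‖ = 1 / 2 by norm_num] at this
      linarith
    have hpos : 0 < ‖z - 1 / 2‖ := by
      refine norm_pos_iff.2 fun h => ?_
      rw [sub_eq_zero.1 h] at hz; norm_num at hz
    rw [norm_div, norm_one, div_le_div_iff₀ (by positivity) hpos]
    linarith
  have := norm_sub_norm_le (1 / (z - 1 / 2)) (-S)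
  rw [sub_neg_eq_add, norm_neg] at this
  have h3 : 1 / (2 * ‖z‖) + 1 / (16 * ‖z‖) ≤ 2 / (3 * ‖z‖) := by
    rw [div_add_div _ _ (by positivity) (by positivity), div_le_div_iff₀ (by positivity) (by positivity)]
    nlinarith
  linarith

theorem stmt5_general (G : ℂ → ℂ)
    (hGformula : ∀ z : ℂ, z ≠ 1 / 2 →
      (∀ k : ℕ, z ≠ 2 ^ (k + 10) + 1 / 2 ∧ z ≠ 2 ^ (k + 10) - 1 / 2) →
      G z = Complex.cos ((Real.pi : ℂ) * z) *
        (1 / (z - 1 / 2) + ∑' k : ℕ,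
          (1 / (z - 2 ^ (k + 10) + 1 / 2) - 1 / (z - 2 ^ (k + 10) - 1 / 2)))) :
    ∃ c > (0:ℝ), ∃ K : ℕ, ∀ k : ℕ, K ≤ k → ∀ z : ℂ,
      ‖z‖ = 2 ^ k + 2 ^ (k - 1) →
      c * Real.exp (Real.pi * |z.im|) / ‖z‖ ≤ ‖G z‖ := by
  refine ⟨1 / 12, by norm_num, 1, fun k hk z hz => ?_⟩
  obtain ⟨j, rfl⟩ : ∃ j, k = j + 1 := ⟨k - 1, by omega⟩
  have hzj : ‖z‖ = 3 * 2 ^ j := by rw [hz, Nat.add_sub_cancel, pow_succ]; ring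
  have hz1 : 1 ≤ ‖z‖ := by rw [hzj]; linarith [one_le_pow₀ (M₀ := ℝ) one_le_two (n := j)]
  have hz_half : z ≠ 1 / 2 := by rintro rfl; norm_num at hz1
  rw [hGformula z hz_half fun m => ne_two_pow_add_half_and_ne_two_pow_sub_half hzj (m + 10),
    norm_mul]
  have hcos := exp_div_six_le_norm_cos_pi_mul (3 * 2 ^ j) (z := z) (by rw [hzj]; push_cast; rfl)
  have hfactor := inv_two_mul_norm_le_norm_one_div_sub_half_add hz1 (norm_lacunarySum_le hzj)
  calc 1 / 12 * exp (π * |z.im|) / ‖z‖ = exp (π * |z.im|) / 6 * (1 / (2 * ‖z‖)) := by ring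
    _ ≤ _ := mul_le_mul hcos hfactor (by positivity) (norm_nonneg _)

/-- **Lower bound for `G` on lacunary circles.**
For the entire function
`G(z) = cos πz · (1/(z - 1/2) + ∑_{k≥10} (1/(z - 2^k + 1/2) - 1/(z - 2^k - 1/2)))`
there are `c > 0` and `K ∈ ℕ` such that `|G(z)| ≥ c e^{π|Im z|}/|z|` whenever
`|z| = 2^k + 2^{k-1}` with `k ≥ K`. -/
theorem stmt5 (G : ℂ → ℂ) (hGdiff : Differentiable ℂ G)
    (hGformula : ∀ z : ℂ, z ≠ 1 / 2 →
      (∀ k : ℕ, z ≠ 2 ^ (k + 10) + 1 / 2 ∧ z ≠ 2 ^ (k + 10) - 1 / 2) →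
      G z = Complex.cos ((Real.pi : ℂ) * z) *
        (1 / (z - 1 / 2) + ∑' k : ℕ,
          (1 / (z - 2 ^ (k + 10) + 1 / 2) - 1 / (z - 2 ^ (k + 10) - 1 / 2)))) :
    ∃ c > (0:ℝ), ∃ K : ℕ, ∀ k : ℕ, K ≤ k → ∀ z : ℂ,
      ‖z‖ = 2 ^ k + 2 ^ (k - 1) →
      c * Real.exp (Real.pi * |z.im|) / ‖z‖ ≤ ‖G z‖ :=
  stmt5_general G hGformula
end

section
/- Let (ρ_k)_{k≥1}, (d_k)_{k≥1} be positive reals with 2ρ_k ≤ ρ_{k+1}, 3 ≤ d_k ≤ 0.1ρ_k, and set I_k = [ρ_k − d_k, ρ_k + d_k] and J_k = [ρ_k − d_k/2, ρ_k + d_k/2]. Let G : ℤ → ℝ satisfy Σ_{n∈ℤ} G(n)²/(|n| + 1) < ∞, set g_k = Σ_{n∈I_k∩ℤ} G(n)², and assume there is a constant C > 0 such that Σ_{n∈ℤ∖I_k} G(n)²/|n − ρ_k| ≤ C·g_k/d_k for every k. Then there exists a constant C' > 0 (independent of k) such that for every k there is a set N_k ⊆ J_k ∩ ℤ with |N_k|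 ≥ d_k/2 such that for every n ∈ N_k: Σ_{m∈ℤ} G(m)²/(n + 1/2 − m)² ≤ C'·g_k/d_k and |Σ_{m∈ℤ} G(m)²/(m − n − 1/2)| ≤ C'·g_k/d_k. -/
open scoped Classical

/-!
Fix `k` and write `I`, `J` for the integer points of `I_k`, `J_k`, `g = g_k` and `D = d_k`.
Each series splits into its part over `I` and a tail. For `n ∈ J` and `m ∉ I` one has
`|m - n - 1/2| ≥ 1` and `|m - ρ_k| ≤ 3 |m - n - 1/2|`, so both tails are at most `3 C g / D`.

Put `t = 96 g / D`. Since `∑_{j ∈ ℤ} (j + 1/2)⁻² ≤ 12`, the parts over `I` of the first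
series add up to at most `12 g` over `n ∈ J`, so at most `12 g / t` points of `J` violate the
bound `t`. For the second series we use Boole's equality: for masses `a_m > 0` the equation
`∑ a_m / (x - m) = t` has a root `y_m` between each pole `m` and the next one (or `∞`); these
are the roots of a polynomial of degree `#I`, and Vieta's formula gives
`∑ (y_m - m) = ∑ a_m / t`. A point `n + 1/2` where the sum exceeds `t` lies in some
`(m, y_m)`, so there are at most `2 g / t` of them, and `4 g / t` for the absolute value.
Altogether at most `D / 6` of the at least `D - 1` points of `J` are bad, which leaves `D / 2`
good ones.
-/

open Polynomial Finset

theorem Polynomial.nextCoeff_eq_neg_leadingCoeff_mul_sum {K : Type*} [Field K] {Q : K[X]}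
    {S : Finset K} (hQ : Q ≠ 0) (hS : ∀ y ∈ S, Q.IsRoot y) (hcard : Q.natDegree ≤ #S) :
    Q.nextCoeff = -Q.leadingCoeff * ∑ y ∈ S, y := by
  have hle : S.val ≤ Q.roots :=
    (Multiset.le_iff_subset S.nodup).2 fun y hy => (mem_roots hQ).2 (hS y hy)
  have hroots : S.val = Q.roots := Multiset.eq_of_le_of_card_le hle ((card_roots' Q).trans hcard)
  have hsplit : Splits Q := splits_iff_card_roots.2 <|
    le_antisymm (card_roots' Q) (by rw [← hroots]; exact hcard)
  rw [hsplit.nextCoeff_eq_neg_sum_roots_mul_leadingCoeff, ← hroots, Finset.sum_val]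
  rfl

theorem exists_mem_Ioo_eq_zero_of_mul_neg {f : ℝ → ℝ} {x y : ℝ} (hxy : x ≤ y)
    (hf : ContinuousOn f (Set.Icc x y)) (h : f x * f y < 0) : ∃ z ∈ Set.Ioo x y, f z = 0 := by
  have hzero : (0 : ℝ) ∈ Set.uIcc (f x) (f y) := by
    rcases mul_neg_iff.1 h with ⟨hx, hy⟩ | ⟨hx, hy⟩
    · exact Set.mem_uIcc.2 (Or.inr ⟨hy.le, hx.le⟩)
    · exact Set.mem_uIcc.2 (Or.inl ⟨hx.le, hy.le⟩)
  obtain ⟨z, hz, hfz⟩ := intermediate_value_uIcc (by rwa [Set.uIcc_of_le hxy]) hzero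
  rw [Set.uIcc_of_le hxy] at hz
  refine ⟨z, ⟨lt_of_le_of_ne hz.1 ?_, lt_of_le_of_ne hz.2 ?_⟩, hfz⟩ <;> rintro rfl <;>
    simp [hfz] at h

section Boole

variable {ι : Type*} (P : Finset ι) (p a : ι → ℝ) (t : ℝ)

/-- The numerator of `t - ∑ i ∈ P, a i / (X - p i)` over `∏ i ∈ P, (X - p i)`. -/
noncomputable def boolePoly : ℝ[X] :=
  C t * ∏ i ∈ P, (X - C (p i)) - ∑ i ∈ P, C (a i) * ∏ j ∈ P.erase i, (X - C (p j))

theorem eval_boolePoly (x : ℝ) : (boolePoly P p a t).eval x =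
    t * ∏ i ∈ P, (x - p i) - ∑ i ∈ P, a i * ∏ j ∈ P.erase i, (x - p j) := by
  simp [boolePoly, eval_prod, eval_finsetSum]

variable {P p a t}

theorem eval_boolePoly_of_forall_ne {x : ℝ} (hx : ∀ i ∈ P, x ≠ p i) :
    (boolePoly P p a t).eval x = (t - ∑ i ∈ P, a i / (x - p i)) * ∏ i ∈ P, (x - p i) := by
  rw [eval_boolePoly, sub_mul, sum_mul]
  congr 1
  refine sum_congr rfl fun i hi => ?_
  rw [← mul_prod_erase P _ hi]
  field_simp [sub_ne_zero.2 (hx i hi)]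

theorem eval_boolePoly_pole {i : ι} (hi : i ∈ P) :
    (boolePoly P p a t).eval (p i) = -(a i * ∏ j ∈ P.erase i, (p i - p j)) := by
  rw [eval_boolePoly, prod_eq_zero hi (sub_self _), mul_zero, zero_sub,
    sum_eq_single_of_mem i hi fun j _ hji => ?_]
  rw [prod_eq_zero (mem_erase.2 ⟨Ne.symm hji, hi⟩) (sub_self _), mul_zero]

theorem eval_boolePoly_pole_mul_pole_neg (hp : Function.Injective p) (ha : ∀ i ∈ P, 0 < a i)
    {i j : ι} (hi : i ∈ P) (hj : j ∈ P) (hij : p i < p j)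
    (hgap : ∀ k ∈ P, p k ≤ p i ∨ p j ≤ p k) :
    (boolePoly P p a t).eval (p i) * (boolePoly P p a t).eval (p j) < 0 := by
  have hne : i ≠ j := fun h => hij.ne (congrArg p h)
  rw [eval_boolePoly_pole hi, eval_boolePoly_pole hj,
    ← mul_prod_erase _ _ (mem_erase.2 ⟨hne.symm, hj⟩),
    ← mul_prod_erase _ _ (mem_erase.2 ⟨hne, hi⟩), erase_right_comm (a := j)]
  set A := ∏ k ∈ (P.erase i).erase j, (p i - p k)
  set B := ∏ k ∈ (P.erase i).erase j, (p j - p k)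
  have hAB : 0 < A * B := by
    rw [← prod_mul_distrib]
    refine prod_pos fun k hk => ?_
    obtain ⟨hkj, hki, hk⟩ := by simpa only [mem_erase] using hk
    rcases hgap k hk with h | h
    · have := lt_of_le_of_ne h (hp.ne hki)
      exact mul_pos (by linarith) (by linarith)
    · have := lt_of_le_of_ne h (hp.ne hkj).symm
      exact mul_pos_of_neg_of_neg (by linarith) (by linarith)
  calc -(a i * ((p i - p j) * A)) * -(a j * ((p j - p i) * B))
      = a i * a j * -(p j - p i) ^ 2 * (A * B) := by ring
    _ < 0 := mul_neg_of_neg_of_pos (mul_neg_of_pos_of_neg (mul_pos (ha i hi) (ha j hj))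
        (neg_neg_of_pos (pow_pos (sub_pos.2 hij) 2))) hAB

theorem eval_boolePoly_top_pole_neg (hp : Function.Injective p) (ha : ∀ i ∈ P, 0 < a i)
    {i : ι} (hi : i ∈ P) (htop : ∀ k ∈ P, p k ≤ p i) :
    (boolePoly P p a t).eval (p i) < 0 := by
  rw [eval_boolePoly_pole hi, neg_lt_zero]
  refine mul_pos (ha i hi) (prod_pos fun k hk => ?_)
  obtain ⟨hki, hk⟩ := mem_erase.1 hk
  exact sub_pos.2 (lt_of_le_of_ne (htop k hk) (hp.ne hki))

theorem coeff_boolePoly_card : (boolePoly P p a t).coeff #P = t := by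
  have hE : ∀ i ∈ P, ((∏ j ∈ P.erase i, (X - C (p j))).coeff #P) = 0 := fun i hi =>
    coeff_eq_zero_of_natDegree_lt <| by
      rw [natDegree_finsetProd_X_sub_C_eq_card, card_erase_of_mem hi]
      exact Nat.sub_lt (card_pos.2 ⟨i, hi⟩) one_pos
  have hM : (∏ i ∈ P, (X - C (p i))).coeff #P = 1 := by
    simpa using (monic_prod_of_monic P _ fun i _ => monic_X_sub_C (p i)).coeff_natDegree
  simp only [boolePoly, coeff_sub, coeff_C_mul, finsetSum_coeff, hM]
  rw [sum_eq_zero fun i hi => by rw [hE i hi, mul_zero]]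
  ring

theorem natDegree_boolePoly_le : (boolePoly P p a t).natDegree ≤ #P := by
  refine (natDegree_sub_le _ _).trans (max_le ?_ (natDegree_sum_le_of_forall_le _ _ fun i _ => ?_))
  · exact natDegree_C_mul_le _ _ |>.trans (natDegree_finsetProd_X_sub_C_eq_card _ _).le
  · refine natDegree_C_mul_le _ _ |>.trans ?_
    rw [natDegree_finsetProd_X_sub_C_eq_card]
    exact card_erase_le

theorem coeff_boolePoly_card_sub_one (hP : P.Nonempty) :
    (boolePoly P p a t).coeff (#P - 1) = t * -∑ i ∈ P, p i - ∑ i ∈ P, a i := by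
  have hE : ∀ i ∈ P, ((∏ j ∈ P.erase i, (X - C (p j))).coeff (#P - 1)) = 1 := fun i hi => by
    simpa [card_erase_of_mem hi] using
      (monic_prod_of_monic (P.erase i) _ fun j _ => monic_X_sub_C (p j)).coeff_natDegree
  simp only [boolePoly, coeff_sub, coeff_C_mul, finsetSum_coeff,
    prod_X_sub_C_coeff_card_pred P p (card_pos.2 hP)]
  congr 1
  exact sum_congr rfl fun i hi => by rw [hE i hi, mul_one]

theorem natDegree_boolePoly (ht : t ≠ 0) : (boolePoly P p a t).natDegree = #P :=
  natDegree_eq_of_le_of_coeff_ne_zero natDegree_boolePoly_le (by rwa [coeff_boolePoly_card])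

theorem leadingCoeff_boolePoly (ht : t ≠ 0) : (boolePoly P p a t).leadingCoeff = t := by
  rw [leadingCoeff, natDegree_boolePoly ht, coeff_boolePoly_card]

theorem boolePoly_ne_zero (ht : t ≠ 0) : boolePoly P p a t ≠ 0 := fun h =>
  ht (by rw [← leadingCoeff_boolePoly ht, h, leadingCoeff_zero])

theorem nextCoeff_boolePoly (hP : P.Nonempty) (ht : t ≠ 0) :
    (boolePoly P p a t).nextCoeff = t * -∑ i ∈ P, p i - ∑ i ∈ P, a i := by
  rw [nextCoeff_of_natDegree_pos (by rw [natDegree_boolePoly ht]; exact card_pos.2 hP),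
    natDegree_boolePoly ht, coeff_boolePoly_card_sub_one hP]

theorem exists_isRoot_boolePoly_gap (hp : Function.Injective p) (ha : ∀ i ∈ P, 0 < a i)
    (ht : 0 < t) {i : ι} (hi : i ∈ P) :
    ∃ y, p i < y ∧ (∀ j ∈ P, p i < p j → y < p j) ∧ (boolePoly P p a t).IsRoot y := by
  suffices ∃ z, p i < z ∧ (∀ j ∈ P, p i < p j → z ≤ p j) ∧
      (boolePoly P p a t).eval (p i) * (boolePoly P p a t).eval z < 0 by
    obtain ⟨z, hiz, hz, hsign⟩ := this
    obtain ⟨y, hy, hroot⟩ :=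
      exists_mem_Ioo_eq_zero_of_mul_neg hiz.le (boolePoly P p a t).continuous.continuousOn hsign
    exact ⟨y, hy.1, fun j hj hij => hy.2.trans_le (hz j hj hij), hroot⟩
  by_cases htop : ∃ j ∈ P, p i < p j
  · obtain ⟨j, hj, hmin⟩ :=
      exists_min_image (P.filter (p i < p ·)) p (by simpa [Finset.Nonempty])
    rw [mem_filter] at hj
    refine ⟨p j, hj.2, fun k hk hik => hmin k (mem_filter.2 ⟨hk, hik⟩),
      eval_boolePoly_pole_mul_pole_neg hp ha hi hj.1 hj.2 fun k hk => ?_⟩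
    exact (le_or_gt (p k) (p i)).imp_right fun h => hmin k (mem_filter.2 ⟨hk, h⟩)
  · simp only [not_exists, not_and, not_lt] at htop
    have hdeg : 0 < (boolePoly P p a t).degree := by
      rw [degree_eq_natDegree (boolePoly_ne_zero ht.ne'), natDegree_boolePoly ht.ne']
      exact_mod_cast card_pos.2 ⟨i, hi⟩
    have hlead : 0 ≤ (boolePoly P p a t).leadingCoeff := by
      rw [leadingCoeff_boolePoly ht.ne']
      exact ht.le
    obtain ⟨z, hz, hiz⟩ :=
      ((tendsto_atTop_of_leadingCoeff_nonneg _ hdeg hlead).eventually_gt_atTop 0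
        |>.and (Filter.eventually_gt_atTop (p i))).exists
    exact ⟨z, hiz, fun j hj hij => absurd (htop j hj) (not_le.2 hij),
      mul_neg_of_neg_of_pos (eval_boolePoly_top_pole_neg hp ha hi htop) hz⟩

theorem exists_boole_roots (hP : P.Nonempty) (hp : Function.Injective p)
    (ha : ∀ i ∈ P, 0 < a i) (ht : 0 < t) :
    ∃ Y : ι → ℝ, (∀ i ∈ P, p i < Y i ∧ (∀ j ∈ P, p i < p j → Y i < p j) ∧
      ∑ j ∈ P, a j / (Y i - p j) = t) ∧
      ∑ i ∈ P, (Y i - p i) = (∑ i ∈ P, a i) / t := by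
  choose! Y hYpole hYgap hYroot using
    fun i (hi : i ∈ P) => exists_isRoot_boolePoly_gap hp ha ht hi
  have hYne : ∀ i ∈ P, ∀ j ∈ P, Y i ≠ p j := fun i hi j hj => by
    rcases le_or_gt (p j) (p i) with h | h
    · exact (h.trans_lt (hYpole i hi)).ne'
    · exact (hYgap i hi j hj h).ne
  have hYinj : Set.InjOn Y P := fun i hi j hj hij => by
    by_contra hne
    rcases lt_or_gt_of_ne (hp.ne hne) with h | h
    · exact ((hYgap i hi j hj h).trans (hYpole j hj)).ne hij
    · exact ((hYgap j hj i hi h).trans (hYpole i hi)).ne hij.symm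
  refine ⟨Y, fun i hi => ⟨hYpole i hi, hYgap i hi, ?_⟩, ?_⟩
  · have hprod : ∏ j ∈ P, (Y i - p j) ≠ 0 :=
      prod_ne_zero_iff.2 fun j hj => sub_ne_zero.2 (hYne i hi j hj)
    have := hYroot i hi
    rw [IsRoot, eval_boolePoly_of_forall_ne (hYne i hi), mul_eq_zero, sub_eq_zero] at this
    exact (this.resolve_right hprod).symm
  · have hvieta := nextCoeff_eq_neg_leadingCoeff_mul_sum (S := P.image Y)
      (boolePoly_ne_zero ht.ne') (by simpa using hYroot)
      (by rw [natDegree_boolePoly ht.ne', card_image_of_injOn hYinj])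
    rw [nextCoeff_boolePoly hP ht.ne', leadingCoeff_boolePoly ht.ne', sum_image hYinj] at hvieta
    rw [sum_sub_distrib, eq_div_iff ht.ne']
    linarith

end Boole

section Counting

variable {ι : Type*}

theorem sum_div_sub_le_sum_div_sub {P : Finset ι} {p a : ι → ℝ} (ha : ∀ i ∈ P, 0 ≤ a i)
    {x y : ℝ} (hxy : x ≤ y) (hgap : ∀ i ∈ P, p i < x ∨ y < p i) :
    ∑ i ∈ P, a i / (y - p i) ≤ ∑ i ∈ P, a i / (x - p i) := by
  refine sum_le_sum fun i hi => (hgap i hi).elim (fun h => ?_) fun h => ?_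
  · exact div_le_div_of_nonneg_left (ha i hi) (by linarith) (by linarith)
  · simpa only [mul_one_div] using mul_le_mul_of_nonneg_left
      (one_div_le_one_div_of_neg_of_le (by linarith) (by linarith)) (ha i hi)

theorem Int.card_Ico_ceil_sub_half_le {b : ℤ} {y : ℝ} (hby : (b : ℝ) < y) :
    (#(Ico b ⌈y - 1 / 2⌉) : ℝ) ≤ 2 * (y - b) := by
  rw [Int.card_Ico]
  rcases le_or_gt ⌈y - 1 / 2⌉ b with h | h
  · rw [Int.toNat_of_nonpos (by omega), Nat.cast_zero]
    linarith
  · have hb : (b : ℝ) + 1 ≤ ⌈y - 1 / 2⌉ := by exact_mod_cast h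
    have := Int.ceil_lt_add_one (y - 1 / 2)
    rw [← Int.cast_natCast, Int.toNat_of_nonneg (by omega), Int.cast_sub]
    linarith

theorem card_filter_lt_sum_div_le {P : Finset ι} {p : ι → ℤ} (hp : Function.Injective p)
    {a : ι → ℝ} (ha : ∀ i ∈ P, 0 < a i) {t : ℝ} (ht : 0 < t) (T : Finset ℤ) :
    #(T.filter fun n : ℤ => t < ∑ i ∈ P, a i / ((n : ℝ) + 1 / 2 - p i)) * t ≤
      2 * ∑ i ∈ P, a i := by
  rcases P.eq_empty_or_nonempty with rfl | hP
  · simp [not_lt.2 ht.le]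
  obtain ⟨Y, hY, hYsum⟩ :=
    exists_boole_roots (p := fun i => (p i : ℝ)) hP (Int.cast_injective.comp hp) ha ht
  -- a bad `n` lies left of `Y i`, where `p i` is the nearest pole `≤ n`: the sum decreases
  -- on the gap between `p i` and the next pole, and equals `t` at `Y i`
  have hsub : T.filter (fun n : ℤ => t < ∑ i ∈ P, a i / ((n : ℝ) + 1 / 2 - p i)) ⊆
      P.biUnion fun i => Ico (p i) ⌈Y i - 1 / 2⌉ := by
    intro n hn
    have hbad := (mem_filter.1 hn).2
    have hleft : (P.filter (p · ≤ n)).Nonempty := by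
      by_contra hempty
      simp only [not_nonempty_iff_eq_empty, filter_eq_empty_iff, not_le] at hempty
      refine hbad.not_ge (ht.le.trans' (sum_nonpos fun i hi => div_nonpos_of_nonneg_of_nonpos
        (ha i hi).le ?_))
      have : (n : ℝ) + 1 ≤ p i := by exact_mod_cast hempty hi
      linarith
    obtain ⟨i, hi, hmax⟩ := exists_max_image _ p hleft
    obtain ⟨hiP, hin⟩ := mem_filter.1 hi
    refine mem_biUnion.2 ⟨i, hiP, mem_Ico.2 ⟨hin, Int.lt_ceil.2 ?_⟩⟩
    by_contra! hle
    have hgap : ∀ j ∈ P, (p j : ℝ) < Y i ∨ (n : ℝ) + 1 / 2 < p j := fun j hj => by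
      rcases le_or_gt (p j) n with h | h
      · have : (p j : ℝ) ≤ p i := by exact_mod_cast hmax j (mem_filter.2 ⟨hj, h⟩)
        exact Or.inl (this.trans_lt (hY i hiP).1)
      · have : (n : ℝ) + 1 ≤ p j := by exact_mod_cast h
        exact Or.inr (by linarith)
    have := sum_div_sub_le_sum_div_sub (fun j hj => (ha j hj).le) (by linarith) hgap
    linarith [(hY i hiP).2.2]
  calc #(T.filter fun n : ℤ => t < ∑ i ∈ P, a i / ((n : ℝ) + 1 / 2 - p i)) * t
      ≤ (∑ i ∈ P, (#(Ico (p i) ⌈Y i - 1 / 2⌉) : ℝ)) * t := by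
        gcongr
        exact_mod_cast (card_le_card hsub).trans card_biUnion_le
    _ ≤ (∑ i ∈ P, 2 * (Y i - p i)) * t := by
        gcongr with i hi
        exact Int.card_Ico_ceil_sub_half_le (hY i hi).1
    _ = 2 * ∑ i ∈ P, a i := by
        rw [← mul_sum, hYsum]
        field_simp

theorem card_filter_lt_abs_sum_div_le {P : Finset ι} {p : ι → ℤ} (hp : Function.Injective p)
    {a : ι → ℝ} (ha : ∀ i ∈ P, 0 ≤ a i) {t : ℝ} (ht : 0 < t) (T : Finset ℤ) :
    #(T.filter fun n : ℤ => t < |∑ i ∈ P, a i / ((p i : ℝ) - n - 1 / 2)|) * t ≤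
      4 * ∑ i ∈ P, a i := by
  set Q := P.filter (a · ≠ 0)
  have hQ : ∀ i ∈ Q, 0 < a i := fun i hi =>
    (ha i (mem_filter.1 hi).1).lt_of_ne (mem_filter.1 hi).2.symm
  have hsum : ∀ f : ι → ℝ, ∑ i ∈ P, a i / f i = ∑ i ∈ Q, a i / f i := fun f =>
    (sum_filter_of_ne fun i _ h => left_ne_zero_of_mul h).symm
  rw [← sum_filter_ne_zero]
  simp only [hsum]
  set S : ℤ → ℝ := fun n => ∑ i ∈ Q, a i / ((p i : ℝ) - n - 1 / 2)
  have hleft : #(T.filter fun n => t < -S n) * t ≤ 2 * ∑ i ∈ Q, a i := by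
    have hneg : ∀ n : ℤ, -S n = ∑ i ∈ Q, a i / ((n : ℝ) + 1 / 2 - p i) := fun n => by
      rw [← sum_neg_distrib]
      exact sum_congr rfl fun i _ => by rw [← div_neg]; ring_nf
    simpa only [hneg] using card_filter_lt_sum_div_le hp hQ ht T
  -- reflecting `n ↦ -1 - n` and the poles `p i ↦ -p i` turns `S` into the one-sided sum above
  have hright : #(T.filter fun n => t < S n) * t ≤ 2 * ∑ i ∈ Q, a i := by
    set σ : ℤ ↪ ℤ := (Equiv.subLeft (-1)).toEmbedding
    have hσ (n : ℤ) : ∑ i ∈ Q, a i / ((σ n : ℝ) + 1 / 2 - ((-p i : ℤ) : ℝ)) = S n :=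
      sum_congr rfl fun i _ => by
        simp only [σ, Equiv.coe_toEmbedding, Equiv.subLeft_apply]
        push_cast
        ring_nf
    have := card_filter_lt_sum_div_le (p := fun i => -p i) (neg_injective.comp hp) hQ ht (T.map σ)
    rw [filter_map, card_map] at this
    simpa only [Function.comp_def, hσ] using this
  have hsplit : T.filter (fun n => t < |S n|) =
      T.filter (fun n => t < S n) ∪ T.filter (fun n => t < -S n) := by
    rw [← filter_or]
    exact filter_congr fun n _ => lt_abs
  calc (#(T.filter fun n => t < |S n|) : ℝ) * t
      ≤ (#(T.filter fun n => t < S n) + #(T.filter fun n => t < -S n)) * t := by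
        gcongr
        rw [hsplit]
        exact_mod_cast card_union_le _ _
    _ ≤ 4 * ∑ i ∈ Q, a i := by linarith

end Counting

theorem sum_range_inv_add_half_sq_le (N : ℕ) :
    ∑ k ∈ range N, 1 / ((k : ℝ) + 1 / 2) ^ 2 ≤ 6 - 3 / ((N : ℝ) + 1 / 2) := by
  induction N with
  | zero => norm_num
  | succ N ih =>
    have hstep :
        1 / ((N : ℝ) + 1 / 2) ^ 2 ≤ 3 / ((N : ℝ) + 1 / 2) - 3 / ((N : ℝ) + 1 + 1 / 2) := by
      rw [div_sub_div _ _ (by positivity) (by positivity),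
        div_le_div_iff₀ (by positivity) (by positivity)]
      nlinarith [(N.cast_nonneg : (0 : ℝ) ≤ N)]
    rw [sum_range_succ]
    push_cast
    linarith

theorem summable_inv_int_add_half_sq : Summable fun j : ℤ => 1 / ((j : ℝ) + 1 / 2) ^ 2 :=
  ((Real.summable_one_div_int_add_rpow (1 / 2) 2).2 one_lt_two).congr fun j => by
    rw [Real.rpow_two, sq_abs]

theorem tsum_inv_int_add_half_sq_le : ∑' j : ℤ, 1 / ((j : ℝ) + 1 / 2) ^ 2 ≤ 12 := by
  set f : ℤ → ℝ := fun j => 1 / ((j : ℝ) + 1 / 2) ^ 2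
  have hpos : Summable fun n : ℕ => f n :=
    summable_inv_int_add_half_sq.comp_injective Nat.cast_injective
  have hflip : (fun n : ℕ => f (-(n + 1))) = fun n : ℕ => f n := by
    funext n
    simp only [f]
    push_cast
    ring
  have hnat : ∑' n : ℕ, f n ≤ 6 := by
    refine Real.tsum_le_of_sum_range_le (fun _ => by positivity) fun N => ?_
    have := sum_range_inv_add_half_sq_le N
    have : 0 ≤ 3 / ((N : ℝ) + 1 / 2) := by positivity
    simp only [f, Int.cast_natCast]
    linarith
  rw [tsum_of_nat_of_neg_add_one hpos (hflip ▸ hpos), hflip]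
  linarith

theorem sum_inv_add_half_sub_sq_le (T : Finset ℤ) (m : ℤ) :
    ∑ n ∈ T, 1 / ((n : ℝ) + 1 / 2 - m) ^ 2 ≤ 12 := by
  have hterm : ∀ n : ℤ, 1 / ((n : ℝ) + 1 / 2 - m) ^ 2 =
      1 / ((Equiv.subRight m n : ℝ) + 1 / 2) ^ 2 := fun n => by
    rw [Equiv.subRight_apply, Int.cast_sub]
    ring
  rw [sum_congr rfl fun n _ => hterm n]
  calc ∑ n ∈ T, 1 / ((Equiv.subRight m n : ℝ) + 1 / 2) ^ 2
      ≤ ∑' n : ℤ, 1 / ((Equiv.subRight m n : ℝ) + 1 / 2) ^ 2 :=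
        ((Equiv.subRight m).summable_iff.2 summable_inv_int_add_half_sq).sum_le_tsum T
          fun _ _ => by positivity
    _ = ∑' j : ℤ, 1 / ((j : ℝ) + 1 / 2) ^ 2 :=
        (Equiv.subRight m).tsum_eq fun j : ℤ => 1 / ((j : ℝ) + 1 / 2) ^ 2
    _ ≤ 12 := tsum_inv_int_add_half_sq_le

theorem card_filter_lt_mul_le_sum {α : Type*} {T : Finset α} {f : α → ℝ}
    (hf : ∀ n ∈ T, 0 ≤ f n) (t : ℝ) :
    #(T.filter fun n => t < f n) * t ≤ ∑ n ∈ T, f n :=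
  calc #(T.filter fun n => t < f n) * t = ∑ n ∈ T.filter (fun n => t < f n), t := by
        rw [sum_const, nsmul_eq_mul]
    _ ≤ ∑ n ∈ T.filter (fun n => t < f n), f n :=
        sum_le_sum fun n hn => (mem_filter.1 hn).2.le
    _ ≤ ∑ n ∈ T, f n :=
        sum_le_sum_of_subset_of_nonneg (filter_subset _ _) fun n hn _ => hf n hn

theorem card_filter_lt_sum_div_sq_le {P : Finset ℤ} {a : ℤ → ℝ}
    (ha : ∀ m ∈ P, 0 ≤ a m) (t : ℝ) (T : Finset ℤ) :
    #(T.filter fun n : ℤ => t < ∑ m ∈ P, a m / ((n : ℝ) + 1 / 2 - m) ^ 2) * t ≤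
      12 * ∑ m ∈ P, a m :=
  calc _ ≤ ∑ n ∈ T, ∑ m ∈ P, a m / ((n : ℝ) + 1 / 2 - m) ^ 2 :=
        card_filter_lt_mul_le_sum
          (fun n _ => sum_nonneg fun m hm => div_nonneg (ha m hm) (sq_nonneg _)) t
    _ = ∑ m ∈ P, a m * ∑ n ∈ T, 1 / ((n : ℝ) + 1 / 2 - m) ^ 2 := by
        rw [sum_comm]
        simp only [mul_sum, mul_one_div]
    _ ≤ ∑ m ∈ P, a m * 12 := by
        gcongr with m hm
        · exact ha m hm
        · exact sum_inv_add_half_sub_sq_le T m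
    _ = 12 * ∑ m ∈ P, a m := by rw [← sum_mul, mul_comm]

theorem card_filter_lt_or_lt_abs_mul_le {I : Finset ℤ} {a : ℤ → ℝ}
    (ha : ∀ m ∈ I, 0 ≤ a m) {t : ℝ} (ht : 0 < t) (T : Finset ℤ) :
    #(T.filter fun n : ℤ => t < ∑ m ∈ I, a m / ((n : ℝ) + 1 / 2 - m) ^ 2 ∨
      t < |∑ m ∈ I, a m / ((m : ℝ) - n - 1 / 2)|) * t ≤ 16 * ∑ m ∈ I, a m := by
  have hQ := card_filter_lt_sum_div_sq_le ha t T
  have hH := card_filter_lt_abs_sum_div_le (p := fun m => m) Function.injective_id ha ht T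
  have hcard := Nat.cast_le (α := ℝ).2 (card_union_le
    (T.filter fun n : ℤ => t < ∑ m ∈ I, a m / ((n : ℝ) + 1 / 2 - m) ^ 2)
    (T.filter fun n : ℤ => t < |∑ m ∈ I, a m / ((m : ℝ) - n - 1 / 2)|))
  rw [← filter_or] at hcard
  push_cast at hcard
  nlinarith

theorem exists_large_good_set {I T : Finset ℤ} {a : ℤ → ℝ} (ha : ∀ m ∈ I, 0 ≤ a m)
    {D : ℝ} (hD : 3 ≤ D) (hT : D - 1 ≤ #T) :
    ∃ N ⊆ T, D / 2 ≤ #N ∧ ∀ n ∈ N,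
      ∑ m ∈ I, a m / ((n : ℝ) + 1 / 2 - m) ^ 2 ≤ 96 * (∑ m ∈ I, a m) / D ∧
      |∑ m ∈ I, a m / ((m : ℝ) - n - 1 / 2)| ≤ 96 * (∑ m ∈ I, a m) / D := by
  set g := ∑ m ∈ I, a m
  set t := 96 * g / D
  set bad : ℤ → Prop := fun n => t < ∑ m ∈ I, a m / ((n : ℝ) + 1 / 2 - m) ^ 2 ∨
      t < |∑ m ∈ I, a m / ((m : ℝ) - n - 1 / 2)|
  refine ⟨T.filter (¬ bad ·), filter_subset _ _, ?_, fun n hn => ?_⟩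
  · have hbad : (#(T.filter bad) : ℝ) ≤ D / 6 := by
      rcases (sum_nonneg ha).eq_or_lt with hg | hg
      · -- then `t = 0`, but every sum over `I` vanishes too
        have h0 : ∀ f : ℤ → ℝ, ∑ m ∈ I, a m / f m = 0 := fun f =>
          sum_eq_zero fun m hm => by rw [(sum_eq_zero_iff_of_nonneg ha).1 hg.symm m hm, zero_div]
        have : T.filter bad = ∅ := filter_false_of_mem fun n _ => by simp [bad, t, g, h0, ← hg]
        rw [this, card_empty, Nat.cast_zero]
        linarith
      · have ht : 0 < t := by positivity
        have hcard := card_filter_lt_or_lt_abs_mul_le ha ht T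
        rw [← le_div_iff₀ ht] at hcard
        calc _ ≤ 16 * g / t := hcard
          _ = D / 6 := by
            have : g ≠ 0 := hg.ne'
            simp only [t]
            field_simp
            ring
    have := card_filter_add_card_filter_not (s := T) bad
    have : (#(T.filter bad) : ℝ) + #(T.filter (¬ bad ·)) = #T := by exact_mod_cast this
    linarith
  · have hgood := (mem_filter.1 hn).2
    simp only [bad, not_or, not_lt] at hgood
    exact hgood

theorem Int.sub_sub_one_le_card_Icc_ceil_floor (a b : ℝ) :
    b - a - 1 ≤ #(Icc ⌈a⌉ ⌊b⌋) := by
  rw [Int.card_Icc]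
  have h : ((⌊b⌋ + 1 - ⌈a⌉ : ℤ) : ℝ) ≤ ((⌊b⌋ + 1 - ⌈a⌉).toNat : ℤ) := by
    exact_mod_cast Int.self_le_toNat _
  push_cast at h
  linarith [Int.sub_one_lt_floor b, Int.ceil_lt_add_one a]

theorem abs_tsum_sub_sum_le {ι : Type*} {f w : ι → ℝ} {s : Finset ι} (hw : Summable w)
    (hw0 : ∀ i, 0 ≤ w i) (hfw : ∀ i ∉ s, |f i| ≤ w i) :
    |∑' i, f i - ∑ i ∈ s, f i| ≤ ∑' i, w i := by
  have hfw' : ∀ i : ((s : Set ι)ᶜ : Set ι), ‖f i‖ ≤ (w ∘ (↑)) i := fun i => by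
    simpa only [Real.norm_eq_abs, Function.comp_apply] using hfw i i.2
  have hcompl : Summable fun i : ((s : Set ι)ᶜ : Set ι) => f i :=
    (hw.subtype _).of_norm_bounded hfw'
  rw [← (s.summable_compl_iff.1 hcompl).sum_add_tsum_compl, add_sub_cancel_left,
    ← Real.norm_eq_abs]
  exact (tsum_of_norm_bounded (hw.subtype _).hasSum hfw').trans (hw.tsum_subtype_le _ _ hw0)

theorem summable_sq_div_abs_sub {G : ℤ → ℝ}
    (hG : Summable fun n : ℤ => G n ^ 2 / (|(n : ℝ)| + 1)) (c : ℝ) :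
    Summable fun n : ℤ => G n ^ 2 / |(n : ℝ) - c| := by
  refine (hG.mul_left 2).of_norm_bounded_eventually ?_
  filter_upwards [(tendsto_norm_cocompact_atTop.comp Int.tendsto_coe_cofinite).eventually_ge_atTop
    (2 * |c| + 1)] with n hn
  simp only [Function.comp, Real.norm_eq_abs] at hn ⊢
  have hnc : (|(n : ℝ)| + 1) / 2 ≤ |(n : ℝ) - c| := by
    linarith [abs_sub_abs_le_abs_sub (n : ℝ) c]
  rw [abs_div, abs_of_nonneg (sq_nonneg _), abs_abs]
  calc G n ^ 2 / |(n : ℝ) - c| ≤ G n ^ 2 / ((|(n : ℝ)| + 1) / 2) :=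
        div_le_div_of_nonneg_left (sq_nonneg _) (by positivity) hnc
    _ = 2 * (G n ^ 2 / (|(n : ℝ)| + 1)) := by field_simp

theorem div_abs_sub_le_three_mul_of_far {x y R D c : ℝ} (hD : 3 ≤ D)
    (hx : |x - R| ≤ D / 2 + 1 / 2) (hy : D < |y - R|) (hc : 0 ≤ c) :
    c / |y - x| ≤ 3 * (c / |y - R|) ∧ c / (y - x) ^ 2 ≤ 3 * (c / |y - R|) := by
  have htri := abs_sub_le y x R
  have hyx : 1 ≤ |y - x| := by linarith
  have hdiv : c / |y - x| ≤ 3 * (c / |y - R|) :=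
    calc c / |y - x| ≤ c / (|y - R| / 3) :=
          div_le_div_of_nonneg_left hc (by linarith) (by linarith)
      _ = 3 * (c / |y - R|) := by ring
  refine ⟨hdiv, le_trans ?_ hdiv⟩
  rw [← sq_abs]
  exact div_le_div_of_nonneg_left hc (by positivity) (by nlinarith)

theorem finsum_ite_cast_mem_Icc (f : ℤ → ℝ) (a b : ℝ) :
    ∑ᶠ n : ℤ, (if (n : ℝ) ∈ Set.Icc a b then f n else 0) =
      ∑ n ∈ Icc ⌈a⌉ ⌊b⌋, f n := by
  rw [finsum_eq_sum_of_support_subset _ (s := Icc ⌈a⌉ ⌊b⌋) fun n hn => ?_]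
  · exact sum_congr rfl fun n hn => if_pos (Int.cast_mem_Icc_iff.2 hn)
  · by_contra hnI
    exact hn (if_neg (mt Int.cast_mem_Icc_iff.1 hnI))

theorem abs_tsum_sub_sum_le_three_mul_of_tail_le {G : ℤ → ℝ}
    (hG : Summable fun n : ℤ => G n ^ 2 / (|(n : ℝ)| + 1)) {R D B : ℝ} (hD : 3 ≤ D)
    (htail : (∑' m : ℤ, if (m : ℝ) ∈ Set.Icc (R - D) (R + D) then 0
      else G m ^ 2 / |(m : ℝ) - R|) ≤ B)
    {n : ℤ} (hn : (n : ℝ) ∈ Set.Icc (R - D / 2) (R + D / 2)) :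
    |∑' m : ℤ, G m ^ 2 / ((n : ℝ) + 1 / 2 - m) ^ 2 -
        ∑ m ∈ Icc ⌈R - D⌉ ⌊R + D⌋, G m ^ 2 / ((n : ℝ) + 1 / 2 - m) ^ 2| ≤ 3 * B ∧
      |∑' m : ℤ, G m ^ 2 / ((m : ℝ) - n - 1 / 2) -
        ∑ m ∈ Icc ⌈R - D⌉ ⌊R + D⌋, G m ^ 2 / ((m : ℝ) - n - 1 / 2)| ≤ 3 * B := by
  set w : ℤ → ℝ := fun m => if (m : ℝ) ∈ Set.Icc (R - D) (R + D) then 0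
    else G m ^ 2 / |(m : ℝ) - R|
  have hw0 : ∀ m, 0 ≤ 3 * w m := fun m => by
    simp only [w]
    split_ifs <;> positivity
  have hw : Summable fun m => 3 * w m := by
    refine ((summable_sq_div_abs_sub hG R).of_nonneg_of_le (fun m => ?_) fun m => ?_).mul_left 3
    · linarith [hw0 m]
    · simp only [w]
      split_ifs <;> first | positivity | exact le_rfl
  have hx : |(n : ℝ) + 1 / 2 - R| ≤ D / 2 + 1 / 2 :=
    abs_le.2 ⟨by linarith [hn.1], by linarith [hn.2]⟩
  have hfar : ∀ m ∉ Icc ⌈R - D⌉ ⌊R + D⌋,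
      |G m ^ 2 / ((n : ℝ) + 1 / 2 - m) ^ 2| ≤ 3 * w m ∧
      |G m ^ 2 / ((m : ℝ) - n - 1 / 2)| ≤ 3 * w m := fun m hm => by
    have hmI : (m : ℝ) ∉ Set.Icc (R - D) (R + D) := mt Int.cast_mem_Icc_iff.1 hm
    have hy : D < |(m : ℝ) - R| := lt_of_not_ge fun h =>
      hmI ⟨by linarith [(abs_le.1 h).1], by linarith [(abs_le.1 h).2]⟩
    obtain ⟨habs, hsq⟩ := div_abs_sub_le_three_mul_of_far hD hx hy (sq_nonneg (G m))
    have hsq_eq : ((n : ℝ) + 1 / 2 - m) ^ 2 = ((m : ℝ) - (n + 1 / 2)) ^ 2 := by ring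
    have hlin_eq : (m : ℝ) - n - 1 / 2 = m - (n + 1 / 2) := by ring
    simp only [w, if_neg hmI]
    rw [hsq_eq, hlin_eq, abs_div, abs_div, abs_of_nonneg (sq_nonneg (G m)),
      abs_of_nonneg (sq_nonneg ((m : ℝ) - (n + 1 / 2)))]
    exact ⟨hsq, habs⟩
  have hW : ∑' m, 3 * w m ≤ 3 * B := by
    rw [tsum_mul_left]
    linarith
  exact ⟨(abs_tsum_sub_sum_le hw hw0 fun m hm => (hfar m hm).1).trans hW,
    (abs_tsum_sub_sum_le hw hw0 fun m hm => (hfar m hm).2).trans hW⟩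

theorem stmt10_general (ρ d : ℕ → ℝ)
    (hd3 : ∀ k, 3 ≤ d k)
    (G : ℤ → ℝ)
    (hGsum : Summable fun n : ℤ => G n ^ 2 / (|(n : ℝ)| + 1))
    (g : ℕ → ℝ)
    (hg : ∀ k, g k = ∑ᶠ n : ℤ,
      if (n : ℝ) ∈ Set.Icc (ρ k - d k) (ρ k + d k) then G n ^ 2 else 0)
    (C : ℝ) (hC : 0 < C)
    (h1 : ∀ k, (∑' n : ℤ, if (n : ℝ) ∈ Set.Icc (ρ k - d k) (ρ k + d k) then 0
      else G n ^ 2 / |(n : ℝ) - ρ k|) ≤ C * g k / d k) :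
    ∃ C' > (0:ℝ), ∀ k, ∃ N : Finset ℤ,
      (∀ n ∈ N, (n : ℝ) ∈ Set.Icc (ρ k - d k / 2) (ρ k + d k / 2)) ∧
      d k / 2 ≤ (N.card : ℝ) ∧
      ∀ n ∈ N,
        (∑' m : ℤ, G m ^ 2 / ((n : ℝ) + 1 / 2 - m) ^ 2) ≤ C' * g k / d k ∧
        |∑' m : ℤ, G m ^ 2 / ((m : ℝ) - n - 1 / 2)| ≤ C' * g k / d k := by
  refine ⟨96 + 3 * C, by positivity, fun k => ?_⟩
  have hgI : g k = ∑ m ∈ Icc ⌈ρ k - d k⌉ ⌊ρ k + d k⌋, G m ^ 2 := by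
    rw [hg k, finsum_ite_cast_mem_Icc]
  obtain ⟨N, hNJ, hNcard, hgood⟩ := exists_large_good_set (fun m _ => sq_nonneg (G m)) (hd3 k)
    (by linarith [Int.sub_sub_one_le_card_Icc_ceil_floor (ρ k - d k / 2) (ρ k + d k / 2)])
  refine ⟨N, fun n hn => Int.cast_mem_Icc_iff.2 (hNJ hn), hNcard, fun n hn => ?_⟩
  rw [← hgI] at hgood
  obtain ⟨hQ, hH⟩ := hgood n hn
  obtain ⟨hQtail, hHtail⟩ := abs_tsum_sub_sum_le_three_mul_of_tail_le hGsum (hd3 k) (h1 k)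
    (Int.cast_mem_Icc_iff.2 (hNJ hn))
  have hC' : (96 + 3 * C) * g k / d k = 96 * g k / d k + 3 * (C * g k / d k) := by ring
  constructor
  · linarith [(abs_le.1 hQtail).2]
  · linarith [abs_sub_abs_le_abs_sub (∑' m : ℤ, G m ^ 2 / ((m : ℝ) - n - 1 / 2))
      (∑ m ∈ Icc ⌈ρ k - d k⌉ ⌊ρ k + d k⌋, G m ^ 2 / ((m : ℝ) - n - 1 / 2))]

/-- **Lemma (good points in `J_k`).**
Under a lacunary system of intervals `I_k = [ρ_k - d_k, ρ_k + d_k]` with `3 ≤ d_k ≤ 0.1ρ_k`,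
for `G : ℤ → ℝ` with `∑ G(n)²/(|n|+1) < ∞`, `g_k = ∑_{n ∈ I_k} G(n)²` and
`∑_{n ∉ I_k} G(n)²/|n - ρ_k| ≤ C g_k/d_k`, there is `C' > 0` such that every `k` admits a
set `N_k ⊆ J_k ∩ ℤ = [ρ_k - d_k/2, ρ_k + d_k/2] ∩ ℤ` with `|N_k| ≥ d_k/2` and, for
`n ∈ N_k`, `∑_m G(m)²/(n + 1/2 - m)² ≤ C' g_k/d_k` and `|∑_m G(m)²/(m - n - 1/2)| ≤ C' g_k/d_k`. -/
theorem stmt10 (ρ d : ℕ → ℝ)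
    (hρpos : ∀ k, 0 < ρ k) (hρlac : ∀ k, 2 * ρ k ≤ ρ (k + 1))
    (hd3 : ∀ k, 3 ≤ d k) (hdsmall : ∀ k, d k ≤ 0.1 * ρ k)
    (G : ℤ → ℝ)
    (hGsum : Summable fun n : ℤ => G n ^ 2 / (|(n : ℝ)| + 1))
    (g : ℕ → ℝ)
    (hg : ∀ k, g k = ∑ᶠ n : ℤ,
      if (n : ℝ) ∈ Set.Icc (ρ k - d k) (ρ k + d k) then G n ^ 2 else 0)
    (C : ℝ) (hC : 0 < C)
    (h1 : ∀ k, (∑' n : ℤ, if (n : ℝ) ∈ Set.Icc (ρ k - d k) (ρ k + d k) then 0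
      else G n ^ 2 / |(n : ℝ) - ρ k|) ≤ C * g k / d k) :
    ∃ C' > (0:ℝ), ∀ k, ∃ N : Finset ℤ,
      (∀ n ∈ N, (n : ℝ) ∈ Set.Icc (ρ k - d k / 2) (ρ k + d k / 2)) ∧
      d k / 2 ≤ (N.card : ℝ) ∧
      ∀ n ∈ N,
        (∑' m : ℤ, G m ^ 2 / ((n : ℝ) + 1 / 2 - m) ^ 2) ≤ C' * g k / d k ∧
        |∑' m : ℤ, G m ^ 2 / ((m : ℝ) - n - 1 / 2)| ≤ C' * g k / d k :=
  stmt10_general ρ d hd3 G hGsum g hg C hC h1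
end

section
/- For every C ≥ 1 there exists ε ∈ (0, 1/2) with the following property. Let w : ℤ → [0, ∞) satisfy Σ_{m∈ℤ} w(m)/(|m| + 1) < ∞ and define M(t) = Σ_{m∈ℤ} w(m)/(m − t) for t ∈ ℝ ∖ ℤ. Suppose n ∈ ℤ and A > 0 are such that w(n) ≥ A, w(n + 1) ≥ A, and |M(n + 1/2)| ≤ C·A. Then every t ∈ (n, n + 1) with M(t) = 0 satisfies n + ε < t < n + 1 − ε. -/
set_option maxHeartbeats 1000000

-- summability helper
lemma summ_aux (w : ℤ → ℝ) (hw : ∀ m, 0 ≤ w m)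
    (hsum : Summable fun m : ℤ => w m / (|(m : ℝ)| + 1)) (t δ : ℝ) (hδ : 0 < δ)
    (hd : ∀ m : ℤ, δ ≤ |(m : ℝ) - t|) :
    Summable fun m : ℤ => w m / ((m : ℝ) - t) := by
  set K : ℝ := (|t| + 1) / δ with hK
  have hK0 : 0 ≤ K := by positivity
  apply Summable.of_abs
  apply Summable.of_nonneg_of_le (fun m => abs_nonneg _) (fun m => ?_)
    (hsum.mul_left (1 + K))
  have hdm := hd m
  have habs : |(m : ℝ)| ≤ |(m : ℝ) - t| + |t| := by
    calc |(m : ℝ)| = |((m : ℝ) - t) + t| := by congr 1; ring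
    _ ≤ |(m : ℝ) - t| + |t| := abs_add_le _ _
  have hKδ : K * δ = |t| + 1 := by rw [hK, div_mul_cancel₀ _ (ne_of_gt hδ)]
  have h1 : (|(m : ℝ)| + 1) ≤ (1 + K) * |(m : ℝ) - t| := by
    nlinarith [mul_le_mul_of_nonneg_left hdm hK0]
  rw [abs_div, abs_of_nonneg (hw m)]
  rw [div_le_iff₀ (lt_of_lt_of_le hδ hdm)]
  have hb : (0:ℝ) < |(m : ℝ)| + 1 := by positivity
  have hq0 : 0 ≤ w m / (|(m : ℝ)| + 1) := div_nonneg (hw m) (le_of_lt hb)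
  have hq : w m / (|(m : ℝ)| + 1) * (|(m : ℝ)| + 1) = w m := div_mul_cancel₀ _ (ne_of_gt hb)
  nlinarith [mul_le_mul_of_nonneg_left h1 hq0]

lemma div_neg_mono (a x y : ℝ) (ha : 0 ≤ a) (hx : x ≤ y) (hy : y < 0) : a / y ≤ a / x := by
  have hx0 : x < 0 := lt_of_le_of_lt hx hy
  have h := div_le_div_of_nonneg_left ha (neg_pos.mpr hy) (neg_le_neg hx)
  rw [div_neg, div_neg] at h
  linarith

/-- **Lemma (zeros of `M` stay away from the integers).**
For every `C ≥ 1` there is `ε ∈ (0, 1/2)` such that for any weights `w : ℤ → [0,∞)` with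
`∑ w(m)/(|m|+1) < ∞`, if `M(t) = ∑_m w(m)/(m - t)`, `w(n) ≥ A`, `w(n+1) ≥ A` and
`|M(n + 1/2)| ≤ C·A` for some `n ∈ ℤ`, `A > 0`, then every zero `t ∈ (n, n+1)` of `M`
satisfies `n + ε < t < n + 1 - ε`. -/
theorem stmt11 (C : ℝ) (hC : 1 ≤ C) :
    ∃ ε ∈ Set.Ioo (0 : ℝ) (1 / 2), ∀ w : ℤ → ℝ,
      (∀ m, 0 ≤ w m) →
      (Summable fun m : ℤ => w m / (|(m : ℝ)| + 1)) →
      ∀ n : ℤ, ∀ A : ℝ, 0 < A → A ≤ w n → A ≤ w (n + 1) →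
      |∑' m : ℤ, w m / ((m : ℝ) - (n + 1 / 2))| ≤ C * A →
      ∀ t : ℝ, (n : ℝ) < t → t < n + 1 →
      (∑' m : ℤ, w m / ((m : ℝ) - t)) = 0 →
      (n : ℝ) + ε < t ∧ t < n + 1 - ε := by
  refine ⟨1 / (C + 3), ⟨by positivity, by rw [div_lt_div_iff₀ (by linarith) (by norm_num)]; linarith⟩, ?_⟩
  intro w hw hsum n A hA hwn hwn1 hM t ht1 ht2 hMt
  have hC3 : (0:ℝ) < C + 3 := by linarith
  set ε : ℝ := 1 / (C + 3) with hε
  have hε2 : ε < 1 / 2 := by rw [hε, div_lt_div_iff₀ hC3 (by norm_num)]; linarith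
  have hε0 : 0 < ε := by positivity
  -- summability of f (at t) and g (at n + 1/2)
  set f : ℤ → ℝ := fun m => w m / ((m : ℝ) - t) with hf
  set g : ℤ → ℝ := fun m => w m / ((m : ℝ) - ((n : ℝ) + 1 / 2)) with hg
  have hcases : ∀ m : ℤ, (m : ℝ) ≤ n ∨ (n : ℝ) + 1 ≤ m := by
    intro m
    rcases le_or_gt m n with h | h
    · exact Or.inl (by exact_mod_cast h)
    · right; have : n + 1 ≤ m := h; exact_mod_cast this
  have Sf : Summable f := by
    apply summ_aux w hw hsum t (min (t - n) ((n:ℝ) + 1 - t)) (by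
      apply lt_min <;> linarith)
    intro m
    rcases hcases m with h | h
    · have h1 : min (t - (n:ℝ)) ((n:ℝ) + 1 - t) ≤ t - m := le_trans (min_le_left _ _) (by linarith)
      calc min (t - (n:ℝ)) ((n:ℝ) + 1 - t) ≤ t - m := h1
        _ ≤ |t - m| := le_abs_self _
        _ = |(m:ℝ) - t| := abs_sub_comm _ _
    · have h1 : min (t - (n:ℝ)) ((n:ℝ) + 1 - t) ≤ (m:ℝ) - t := le_trans (min_le_right _ _) (by linarith)
      exact le_trans h1 (le_abs_self _)
  have Sg : Summable g := by
    apply summ_aux w hw hsum ((n:ℝ) + 1/2) (1/2) (by norm_num)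
    intro m
    rcases hcases m with h | h
    · calc (1:ℝ)/2 ≤ (n:ℝ) + 1/2 - m := by linarith
        _ ≤ |(n:ℝ) + 1/2 - m| := le_abs_self _
        _ = |(m:ℝ) - ((n:ℝ) + 1/2)| := abs_sub_comm _ _
    · exact le_trans (by linarith) (le_abs_self _)
  have hMle : (∑' m : ℤ, g m) ≤ C * A := le_trans (le_abs_self _) hM
  have hMge : -(C * A) ≤ (∑' m : ℤ, g m) := neg_le_of_abs_le hM
  rcases le_total t ((n:ℝ) + 1/2) with htle | htge
  · -- left half: t ≤ n + 1/2, bound t - n from below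
    have hsplitf := Summable.tsum_eq_add_tsum_ite Sf n
    have hsplitg := Summable.tsum_eq_add_tsum_ite Sg n
    have hST : (∑' m : ℤ, ite (m = n) 0 (f m)) ≤ ∑' m : ℤ, ite (m = n) 0 (g m) := by
      apply Summable.tsum_le_tsum _ ((Sf.update n 0).congr ?_) ((Sg.update n 0).congr ?_)
      · intro m
        by_cases hmn : m = n
        · simp [hmn]
        · simp only [hmn, if_false]
          rcases hcases m with h | h
          · have hmne : (m:ℝ) ≠ n := by exact_mod_cast hmn
            have hmlt : (m:ℝ) < n := lt_of_le_of_ne h hmne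
            have hmlt2 : (m:ℝ) ≤ (n:ℝ) - 1 := by
              have : m < n := by exact_mod_cast hmlt
              have : m ≤ n - 1 := by omega
              calc (m:ℝ) ≤ ((n - 1 : ℤ) : ℝ) := by exact_mod_cast this
                _ = (n:ℝ) - 1 := by push_cast; ring
            exact div_neg_mono (w m) _ _ (hw m) (by linarith) (by linarith)
          · exact div_le_div_of_nonneg_left (hw m) (by linarith) (by linarith)
      · intro m; simp [Function.update_apply]
      · intro m; simp [Function.update_apply]
    have hgn : g n = -2 * w n := by
      simp only [hg]
      rw [show (n:ℝ) - ((n:ℝ) + 1/2) = -(1/2) by ring]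
      ring
    have hfn : f n = -(w n / (t - (n:ℝ))) := by
      simp only [hf]; rw [show (n:ℝ) - t = -(t - (n:ℝ)) by ring, div_neg]
    have hkey : w n / (t - (n:ℝ)) ≤ C * A + 2 * w n := by
      have h1 : (0:ℝ) = f n + ∑' m : ℤ, ite (m = n) 0 (f m) := by rw [← hsplitf, hMt]
      have h2 : (∑' m : ℤ, g m) = g n + ∑' m : ℤ, ite (m = n) 0 (g m) := hsplitg
      rw [hfn] at h1
      rw [hgn] at h2
      linarith
    constructor
    · by_contra hcon
      push_neg at hcon
      have hs : t - (n:ℝ) ≤ ε := by linarith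
      have hspos : 0 < t - (n:ℝ) := by linarith
      have hq : w n = (w n / (t - (n:ℝ))) * (t - (n:ℝ)) := by field_simp
      have hsC : (t - (n:ℝ)) * (C + 3) ≤ 1 := by
        calc (t - (n:ℝ)) * (C + 3) ≤ ε * (C + 3) := by nlinarith
          _ = 1 := by rw [hε]; field_simp
      have hpos2 : (0:ℝ) ≤ C * A + 2 * w n := by nlinarith [hw n]
      have h1 : w n ≤ (C * A + 2 * w n) * (t - (n:ℝ)) := by
        calc w n = (w n / (t - (n:ℝ))) * (t - (n:ℝ)) := hq
          _ ≤ (C * A + 2 * w n) * (t - (n:ℝ)) := mul_le_mul_of_nonneg_right hkey (le_of_lt hspos)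
      have h2 : (C * A + 2 * w n) * ((t - (n:ℝ)) * (C + 3)) ≤ (C * A + 2 * w n) * 1 :=
        mul_le_mul_of_nonneg_left hsC hpos2
      have h3 : w n * (C + 3) ≤ (C * A + 2 * w n) * (t - (n:ℝ)) * (C + 3) :=
        mul_le_mul_of_nonneg_right h1 (by linarith)
      have h4 : C * A ≤ C * w n := mul_le_mul_of_nonneg_left hwn (by linarith)
      nlinarith [h2, h3, h4]
    · linarith
  · -- right half: t ≥ n + 1/2, bound n + 1 - t from below
    have hsplitf := Summable.tsum_eq_add_tsum_ite Sf (n + 1)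
    have hsplitg := Summable.tsum_eq_add_tsum_ite Sg (n + 1)
    have hST : (∑' m : ℤ, ite (m = n + 1) 0 (g m)) ≤ ∑' m : ℤ, ite (m = n + 1) 0 (f m) := by
      apply Summable.tsum_le_tsum _ ((Sg.update (n+1) 0).congr ?_) ((Sf.update (n+1) 0).congr ?_)
      · intro m
        by_cases hmn : m = n + 1
        · simp [hmn]
        · simp only [hmn, if_false]
          rcases hcases m with h | h
          · exact div_neg_mono (w m) _ _ (hw m) (by linarith) (by linarith)
          · have hmne : (m:ℝ) ≠ (n:ℝ) + 1 := by
              intro hc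
              apply hmn
              exact_mod_cast (show (m:ℝ) = ((n+1 : ℤ):ℝ) by push_cast; linarith)
            have hmgt : (n:ℝ) + 1 < m := lt_of_le_of_ne h (Ne.symm hmne)
            have hmgt2 : (n:ℝ) + 2 ≤ m := by
              have : n + 1 < m := by exact_mod_cast hmgt
              have : n + 2 ≤ m := by omega
              calc (n:ℝ) + 2 = ((n + 2 : ℤ) : ℝ) := by push_cast; ring
                _ ≤ (m:ℝ) := by exact_mod_cast this
            exact div_le_div_of_nonneg_left (hw m) (by linarith) (by linarith)
      · intro m; simp [Function.update_apply]
      · intro m; simp [Function.update_apply]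
    have hgn : g (n + 1) = 2 * w (n + 1) := by
      simp only [hg]
      rw [show (((n + 1 : ℤ)):ℝ) - ((n:ℝ) + 1/2) = 1/2 by push_cast; ring]
      ring
    have hfn : f (n + 1) = w (n + 1) / ((n:ℝ) + 1 - t) := by
      simp only [hf]; push_cast; ring_nf
    have hkey : w (n + 1) / ((n:ℝ) + 1 - t) ≤ C * A + 2 * w (n + 1) := by
      have h1 : (0:ℝ) = f (n + 1) + ∑' m : ℤ, ite (m = n + 1) 0 (f m) := by rw [← hsplitf, hMt]
      have h2 : (∑' m : ℤ, g m) = g (n + 1) + ∑' m : ℤ, ite (m = n + 1) 0 (g m) := hsplitg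
      rw [hfn] at h1
      rw [hgn] at h2
      linarith
    refine ⟨by linarith, ?_⟩
    by_contra hcon
    push_neg at hcon
    have hs : (n:ℝ) + 1 - t ≤ ε := by linarith
    have hspos : 0 < (n:ℝ) + 1 - t := by linarith
    have hq : w (n + 1) = (w (n + 1) / ((n:ℝ) + 1 - t)) * ((n:ℝ) + 1 - t) := by field_simp
    have hsC : ((n:ℝ) + 1 - t) * (C + 3) ≤ 1 := by
      calc ((n:ℝ) + 1 - t) * (C + 3) ≤ ε * (C + 3) := by nlinarith
        _ = 1 := by rw [hε]; field_simp
    have hpos2 : (0:ℝ) ≤ C * A + 2 * w (n + 1) := by nlinarith [hw (n + 1)]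
    have h1 : w (n + 1) ≤ (C * A + 2 * w (n + 1)) * ((n:ℝ) + 1 - t) := by
      calc w (n + 1) = (w (n + 1) / ((n:ℝ) + 1 - t)) * ((n:ℝ) + 1 - t) := hq
        _ ≤ (C * A + 2 * w (n + 1)) * ((n:ℝ) + 1 - t) := mul_le_mul_of_nonneg_right hkey (le_of_lt hspos)
    have h2 : (C * A + 2 * w (n + 1)) * (((n:ℝ) + 1 - t) * (C + 3)) ≤ (C * A + 2 * w (n + 1)) * 1 :=
      mul_le_mul_of_nonneg_left hsC hpos2
    have h3 : w (n + 1) * (C + 3) ≤ (C * A + 2 * w (n + 1)) * ((n:ℝ) + 1 - t) * (C + 3) :=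
      mul_le_mul_of_nonneg_right h1 (by linarith)
    have h4 : C * A ≤ C * w (n + 1) := mul_le_mul_of_nonneg_left hwn1 (by linarith)
    nlinarith [h2, h3, h4]
end

section
/- Let w : ℤ → (0, ∞) satisfy Σ_{m∈ℤ} w(m)/(|m| + 1) < ∞, and define M(t) = Σ_{m∈ℤ} w(m)/(m − t) for t ∈ ℝ ∖ ℤ. Then for every n ∈ ℤ the function M has exactly one zero in the open interval (n, n + 1). -/
/-!
Write `M = discreteCauchyTransform w`. Each term `w m / (m - t)` is increasing in `t` on
`(n, n + 1)`, and comparison with `w m / (|m| + 1)` makes the series converge locally uniformly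
there, so `M` is continuous and strictly increasing on `(n, n + 1)`. Removing the term with the
pole at `n` (resp. `n + 1`) still leaves an increasing function, which is therefore bounded above
near `n` (resp. below near `n + 1`); since the poles have positive weight, `M → -∞` at `n⁺` and
`M → +∞` at `(n + 1)⁻`, and the intermediate value theorem gives the zero.
-/

open Set Filter Topology

noncomputable def discreteCauchyTransform (w : ℤ → ℝ) (t : ℝ) : ℝ :=
  ∑' m : ℤ, w m / ((m : ℝ) - t)

lemma abs_add_one_le_mul_abs_sub {x t δ R : ℝ} (hδ : 0 < δ) (hx : δ ≤ |x - t|) (ht : |t| ≤ R) :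
    |x| + 1 ≤ (1 + (R + 1) / δ) * |x - t| := by
  have hR : R + 1 ≤ (R + 1) / δ * |x - t| := by
    rw [div_mul_eq_mul_div, le_div_iff₀ hδ]
    exact mul_le_mul_of_nonneg_left hx (by linarith [abs_nonneg t])
  linarith [abs_sub_abs_le_abs_sub x t]

lemma norm_div_sub_le {c x t δ R : ℝ} (hc : 0 ≤ c) (hδ : 0 < δ) (hx : δ ≤ |x - t|)
    (ht : |t| ≤ R) : ‖c / (x - t)‖ ≤ (1 + (R + 1) / δ) * (c / (|x| + 1)) := by
  rw [Real.norm_eq_abs, abs_div, abs_of_nonneg hc, div_le_iff₀ (hδ.trans_le hx)]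
  calc c = c / (|x| + 1) * (|x| + 1) := by field_simp
    _ ≤ c / (|x| + 1) * ((1 + (R + 1) / δ) * |x - t|) := by
      gcongr
      exact abs_add_one_le_mul_abs_sub hδ hx ht
    _ = _ := by ring

lemma le_abs_intCast_sub {n : ℤ} {t δ : ℝ} (h₁ : n + δ ≤ t) (h₂ : t + δ ≤ n + 1) (m : ℤ) :
    δ ≤ |(m : ℝ) - t| := by
  rcases le_or_gt m n with h | h
  · have : (m : ℝ) ≤ n := by exact_mod_cast h
    rw [abs_sub_comm]
    exact le_abs.2 (Or.inl (by linarith))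
  · have : (n : ℝ) + 1 ≤ m := by exact_mod_cast h
    exact le_abs.2 (Or.inl (by linarith))

lemma div_sub_lt_div_sub {c x t₁ t₂ : ℝ} (hc : 0 < c) (h : t₁ < t₂) (hx : x ∉ Icc t₁ t₂) :
    c / (x - t₁) < c / (x - t₂) := by
  rcases lt_or_gt_of_ne (show x ≠ t₁ by rintro rfl; exact hx ⟨le_rfl, h.le⟩) with hx₁ | hx₁
  · rw [← neg_sub t₁ x, ← neg_sub t₂ x, div_neg, div_neg, neg_lt_neg_iff]
    exact div_lt_div_of_pos_left hc (by linarith) (by linarith)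
  · have hx₂ : t₂ < x := by
      by_contra! hle
      exact hx ⟨hx₁.le, hle⟩
    exact div_lt_div_of_pos_left hc (by linarith) (by linarith)

lemma tendsto_div_sub_nhdsLT {c : ℝ} (hc : 0 < c) (x : ℝ) :
    Tendsto (fun t => c / (x - t)) (𝓝[<] x) atTop := by
  have h : Tendsto (fun t => x - t) (𝓝[<] x) (𝓝[>] 0) := by
    refine tendsto_nhdsWithin_iff.2
      ⟨?_, eventually_nhdsWithin_of_forall fun t ht => mem_Ioi.2 (sub_pos.2 ht)⟩
    exact ((continuous_sub_left x).tendsto' x 0 (sub_self x)).mono_left nhdsWithin_le_nhds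
  simpa only [div_eq_mul_inv, Pi.inv_apply] using h.inv_tendsto_nhdsGT_zero.const_mul_atTop hc

lemma tendsto_div_sub_nhdsGT {c : ℝ} (hc : 0 < c) (x : ℝ) :
    Tendsto (fun t => c / (x - t)) (𝓝[>] x) atBot := by
  have h : Tendsto (fun t => t - x) (𝓝[>] x) (𝓝[>] 0) := by
    refine tendsto_nhdsWithin_iff.2
      ⟨?_, eventually_nhdsWithin_of_forall fun t ht => mem_Ioi.2 (sub_pos.2 ht)⟩
    exact ((continuous_sub_right x).tendsto' x 0 (sub_self x)).mono_left nhdsWithin_le_nhds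
  simpa only [Function.comp_def, Pi.inv_apply, ← div_eq_mul_inv, ← div_neg, neg_sub] using
    tendsto_neg_atTop_atBot.comp (h.inv_tendsto_nhdsGT_zero.const_mul_atTop hc)

lemma intCast_notMem_Icc {n m : ℤ} {t₁ t₂ : ℝ} (h₁ : (n : ℝ) < t₁) (h₂ : t₂ < n + 1) :
    (m : ℝ) ∉ Icc t₁ t₂ := by
  rintro ⟨hm₁, hm₂⟩
  have : n < m := by exact_mod_cast h₁.trans_le hm₁
  have : m < n + 1 := by exact_mod_cast hm₂.trans_lt h₂
  omega

lemma strictMonoOn_div_intCast_sub {c : ℝ} (hc : 0 < c) (m n : ℤ) :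
    StrictMonoOn (fun t => c / ((m : ℝ) - t)) (Ioo (n : ℝ) (n + 1)) :=
  fun _ ht₁ _ ht₂ h => div_sub_lt_div_sub hc h (intCast_notMem_Icc ht₁.1 ht₂.2)

lemma exists_pos_add_le_of_mem_Ioo {a b t : ℝ} (ht : t ∈ Ioo a b) :
    ∃ δ > 0, a + δ ≤ t ∧ t + δ ≤ b :=
  ⟨min (t - a) (b - t), lt_min (sub_pos.2 ht.1) (sub_pos.2 ht.2),
    by linarith [min_le_left (t - a) (b - t)], by linarith [min_le_right (t - a) (b - t)]⟩

section Summability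

variable {w : ℤ → ℝ} (hw : ∀ m, 0 ≤ w m) (hsum : Summable fun m : ℤ => w m / (|(m : ℝ)| + 1))
include hw hsum

lemma summable_div_intCast_sub {n : ℤ} {t : ℝ} (ht : t ∈ Ioo (n : ℝ) (n + 1)) :
    Summable fun m : ℤ => w m / ((m : ℝ) - t) := by
  obtain ⟨δ, hδ, hδ₁, hδ₂⟩ := exists_pos_add_le_of_mem_Ioo ht
  exact (hsum.mul_left _).of_norm_bounded fun m =>
    norm_div_sub_le (hw m) hδ (le_abs_intCast_sub hδ₁ hδ₂ m) le_rfl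

lemma continuousOn_discreteCauchyTransform (n : ℤ) :
    ContinuousOn (discreteCauchyTransform w) (Ioo (n : ℝ) (n + 1)) := by
  intro t ht
  obtain ⟨δ, hδ, hδ₁, hδ₂⟩ := exists_pos_add_le_of_mem_Ioo ht
  set K := Icc (t - δ / 2) (t + δ / 2)
  have hdist : ∀ s ∈ K, ∀ m : ℤ, δ / 2 ≤ |(m : ℝ) - s| := fun s hs =>
    le_abs_intCast_sub (n := n) (by linarith [hs.1]) (by linarith [hs.2])
  have hcont : ContinuousOn (discreteCauchyTransform w) K := by
    refine continuousOn_tsum (fun m => ?_) (hsum.mul_left _) fun m s hs =>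
      norm_div_sub_le (hw m) (half_pos hδ) (hdist s hs m) (abs_le_max_abs_abs hs.1 hs.2)
    refine continuousOn_const.div (by fun_prop) fun s hs h => ?_
    linarith [hdist s hs m, abs_eq_zero.2 h]
  exact (hcont.continuousAt (Icc_mem_nhds (by linarith) (by linarith))).continuousWithinAt

end Summability

section Monotonicity

variable {w : ℤ → ℝ} (hw : ∀ m, 0 < w m) (hsum : Summable fun m : ℤ => w m / (|(m : ℝ)| + 1))
include hw hsum

lemma strictMonoOn_discreteCauchyTransform (n : ℤ) :
    StrictMonoOn (discreteCauchyTransform w) (Ioo (n : ℝ) (n + 1)) := fun _ ht _ hs hts =>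
  Summable.tsum_lt_tsum (i := n)
    (fun m => (strictMonoOn_div_intCast_sub (hw m) m n ht hs hts).le)
    (strictMonoOn_div_intCast_sub (hw n) n n ht hs hts)
    (summable_div_intCast_sub (fun m => (hw m).le) hsum ht)
    (summable_div_intCast_sub (fun m => (hw m).le) hsum hs)

lemma monotoneOn_discreteCauchyTransform_sub (k n : ℤ) :
    MonotoneOn (fun t => discreteCauchyTransform w t - w k / ((k : ℝ) - t))
      (Ioo (n : ℝ) (n + 1)) := by
  intro t ht s hs hts
  have hsum_t := summable_div_intCast_sub (fun m => (hw m).le) hsum ht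
  have hsum_s := summable_div_intCast_sub (fun m => (hw m).le) hsum hs
  have := (hsum_s.sub hsum_t).le_tsum k fun m _ =>
    sub_nonneg.2 ((strictMonoOn_div_intCast_sub (hw m) m n).monotoneOn ht hs hts)
  rw [hsum_s.tsum_sub hsum_t] at this
  simp only [discreteCauchyTransform]
  linarith

lemma tendsto_discreteCauchyTransform_nhdsGT (n : ℤ) :
    Tendsto (discreteCauchyTransform w) (𝓝[>] (n : ℝ)) atBot := by
  have hs : (n : ℝ) + 1 / 2 ∈ Ioo (n : ℝ) (n + 1) := ⟨by linarith, by linarith⟩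
  refine tendsto_atBot_mono' _ ?_ (tendsto_atBot_add_const_left _
    (discreteCauchyTransform w (n + 1 / 2) - w n / (n - (n + 1 / 2)))
    (tendsto_div_sub_nhdsGT (hw n) n))
  filter_upwards [Ioc_mem_nhdsGT hs.1] with t ht
  have := monotoneOn_discreteCauchyTransform_sub hw hsum n n ⟨ht.1, by linarith [ht.2]⟩ hs ht.2
  linarith

lemma tendsto_discreteCauchyTransform_nhdsLT (n : ℤ) :
    Tendsto (discreteCauchyTransform w) (𝓝[<] ((n : ℝ) + 1)) atTop := by
  have hs : (n : ℝ) + 1 / 2 ∈ Ioo (n : ℝ) (n + 1) := ⟨by linarith, by linarith⟩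
  have hpole := tendsto_div_sub_nhdsLT (hw (n + 1)) ((n + 1 : ℤ) : ℝ)
  push_cast at hpole
  refine tendsto_atTop_mono' _ ?_ (tendsto_atTop_add_const_left _
    (discreteCauchyTransform w (n + 1 / 2) - w (n + 1) / (n + 1 - (n + 1 / 2))) hpole)
  filter_upwards [Ico_mem_nhdsLT hs.2] with t ht
  have := monotoneOn_discreteCauchyTransform_sub hw hsum (n + 1) n hs
    ⟨by linarith [ht.1], ht.2⟩ ht.1
  push_cast at this
  linarith

end Monotonicity

/-- **Unique zero of `M` in each interval `(n, n+1)`.**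
For positive weights `w : ℤ → (0,∞)` with `∑ w(m)/(|m|+1) < ∞`, the function
`M(t) = ∑_{m ∈ ℤ} w(m)/(m - t)` has exactly one zero in each open interval `(n, n+1)`. -/
theorem stmt17 (w : ℤ → ℝ) (hw : ∀ m, 0 < w m)
    (hsum : Summable fun m : ℤ => w m / (|(m : ℝ)| + 1)) :
    ∀ n : ℤ, ∃! t : ℝ, t ∈ Set.Ioo (n : ℝ) (n + 1) ∧
      (∑' m : ℤ, w m / ((m : ℝ) - t)) = 0 := by
  intro n
  have hn : (n : ℝ) < n + 1 := lt_add_one _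
  have hsurj : SurjOn (discreteCauchyTransform w) (Ioo (n : ℝ) (n + 1)) univ :=
    (continuousOn_discreteCauchyTransform (fun m => (hw m).le) hsum n).surjOn_of_tendsto
      (nonempty_Ioo.2 hn)
      ((tendsto_comp_coe_Ioo_atBot hn).2 (tendsto_discreteCauchyTransform_nhdsGT hw hsum n))
      ((tendsto_comp_coe_Ioo_atTop hn).2 (tendsto_discreteCauchyTransform_nhdsLT hw hsum n))
  obtain ⟨t, ht, hzero⟩ := hsurj (mem_univ 0)
  exact ⟨t, ⟨ht, hzero⟩, fun s ⟨hs, hs_zero⟩ =>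
    (strictMonoOn_discreteCauchyTransform hw hsum n).injOn hs ht (hs_zero.trans hzero.symm)⟩
end
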